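/- arXiv:1211.0768 — 4 statements merged into one kernel-verified Lean document; each statement's English description precedes it below -/
import Mathlib

section
/- (Invariance of the leaves through the origin.) Under the stated assumptions, the sets M₀ and N₀ are invariant under the flow: if z₀ ∈ M₀ then z(s, z₀) ∈ M₀ for all s ∈ ℝ, and if z₀ ∈ N₀ then z(s, z₀) ∈ N₀ for all s ∈ ℝ. -/
/-!
The origin is an equilibrium (uniqueness for a Lipschitz ODE), so the defining estimate of `M₀`
says that the orbit `u = (x, y)` grows at most like `e^{(α+δ)t}`; this growth condition is
invariant under time shifts. Conversely, let `m` be the least constant with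
`‖u t‖ ≤ m e^{(α+δ)t}` for `t ≥ 0`. Integrating the `y`-equation backwards from `+∞`, where
`e^{-βt}` beats the growth, gives `‖y t‖ ≤ ρ m e^{(α+δ)t}` with `ρ = δ / (β - α - δ) < 1`, and
variation of constants for the `x`-equation gives `‖x t‖ ≤ max ‖x 0‖ (ρ m) e^{(α+δ)t}`.
Minimality of `m` then forces `m ≤ ‖x 0‖`, which is the defining estimate of `M₀` at the
starting point. `N₀` is `M₀` of the time-reversed system with the roles of `X` and `Y` exchanged.
-/

open Filter Set Asymptotics NormedSpace MeasureTheory intervalIntegral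
open scoped Interval Topology

theorem integral_mul_exp_mul (p a b : ℝ) :
    ∫ v in a..b, p * Real.exp (p * v) = Real.exp (p * b) - Real.exp (p * a) := by
  refine integral_eq_sub_of_hasDerivAt (f := fun v => Real.exp (p * v)) (fun v _ => ?_)
    ((by fun_prop : Continuous fun v => p * Real.exp (p * v)).intervalIntegrable _ _)
  simpa [mul_comm] using ((hasDerivAt_id v).const_mul p).exp

section

variable {X Y : Type*} [NormedAddCommGroup X] [NormedAddCommGroup Y]

theorem Prod.norm_swap (w : X × Y) : ‖w.swap‖ = ‖w‖ := by
  simp [Prod.norm_def, max_comm]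

theorem exists_isLeast_exp_bound {u : ℝ → X} {γ : ℝ} (hu : Continuous u)
    (hgrowth : u =O[atTop] fun t => Real.exp (γ * t)) :
    ∃ m, IsLeast {m | ∀ t, 0 ≤ t → ‖u t‖ ≤ m * Real.exp (γ * t)} m := by
  set S := {m | ∀ t, 0 ≤ t → ‖u t‖ ≤ m * Real.exp (γ * t)}
  have hS : IsClosed S := by
    simp only [S, ofPred_forall]
    exact isClosed_iInter fun t => isClosed_iInter fun _ =>
      isClosed_le continuous_const (by fun_prop)
  have hS₀ : BddBelow S := ⟨0, fun m hm => by simpa using (norm_nonneg _).trans (hm 0 le_rfl)⟩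
  obtain ⟨c, hc⟩ := hgrowth.bound
  obtain ⟨T, hT⟩ := eventually_atTop.1 hc
  obtain ⟨C, hC⟩ := isCompact_Icc.exists_bound_of_continuousOn (s := Icc 0 T)
    (f := fun t => ‖u t‖ / Real.exp (γ * t))
    (hu.norm.div (by fun_prop) fun t => (Real.exp_pos _).ne').continuousOn
  refine ⟨sInf S, hS.isLeast_csInf ⟨max c C, fun t ht => ?_⟩ hS₀⟩
  rcases le_total t T with h | h
  · have := (le_abs_self _).trans (hC t ⟨ht, h⟩)
    rw [div_le_iff₀ (Real.exp_pos _)] at this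
    exact this.trans (by gcongr; exact le_max_right _ _)
  · have := hT t h
    rw [Real.norm_of_nonneg (Real.exp_pos _).le] at this
    exact this.trans (by gcongr; exact le_max_left _ _)

variable [NormedSpace ℝ X] [NormedSpace ℝ Y]

theorem ODE_solution_eq_zero (A : X →L[ℝ] X) (B : Y →L[ℝ] Y) {H : X × Y → X × Y}
    {K : NNReal} (hH : LipschitzWith K H) (hH0 : H 0 = 0) {u : ℝ → X × Y}
    (hu : ∀ t, HasDerivAt u ((A (u t).1, B (u t).2) + H (u t)) t) {t₀ : ℝ} (hu₀ : u t₀ = 0) :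
    u = 0 :=
  ODE_solution_unique_univ (v := fun _ w => A.prodMap B w + H w) (s := fun _ => univ)
    (fun _ => ((A.prodMap B).lipschitz.add hH).lipschitzOnWith) (fun t => ⟨hu t, trivial⟩)
    (g := fun _ => 0) (fun t => ⟨by
      show HasDerivAt _ (A.prodMap B 0 + H 0) t
      rw [map_zero, hH0, add_zero]
      exact hasDerivAt_const t 0, trivial⟩) hu₀

theorem hasDerivAt_swap_comp_neg {A : X →L[ℝ] X} {B : Y →L[ℝ] Y} {u h : ℝ → X × Y}
    (hu : ∀ t, HasDerivAt u ((A (u t).1, B (u t).2) + h t) t) (t : ℝ) :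
    HasDerivAt (fun τ => (u (-τ)).swap)
      (((-B) (u (-t)).2, (-A) (u (-t)).1) + -(h (-t)).swap) t := by
  have hrev := (hu (-t)).scomp t (hasDerivAt_neg t)
  convert (hasFDerivAt_snd.comp_hasDerivAt t hrev).prodMk
    (hasFDerivAt_fst.comp_hasDerivAt t hrev) using 1
  all_goals ext <;> simp

theorem variation_of_constants [CompleteSpace X] (A : X →L[ℝ] X) {x f : ℝ → X}
    (hf : Continuous f) (hx : ∀ t, HasDerivAt x (A (x t) + f t) t) (s t : ℝ) :
    x t = exp ((t - s) • A) (x s) + ∫ v in s..t, exp ((t - v) • A) (f v) := by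
  have hexp : ∀ v, HasDerivAt (fun v => exp ((t - v) • A)) (-(exp ((t - v) • A) * A)) v :=
    fun v => (hasDerivAt_exp_smul_const A (t - v)).comp_const_sub t v
  have hderiv : ∀ v, HasDerivAt (fun v => exp ((t - v) • A) (x v)) (exp ((t - v) • A) (f v)) v :=
    fun v => by simpa using (hexp v).clm_apply (hx v)
  have hint := ((continuous_iff_continuousAt.2 fun v => (hexp v).continuousAt).clm_apply
    hf).intervalIntegrable (μ := volume) s t
  rw [integral_eq_sub_of_hasDerivAt (fun v _ => hderiv v) hint]
  simp [exp_zero]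

theorem norm_le_of_variation_of_constants [CompleteSpace X] (A : X →L[ℝ] X) {x f : ℝ → X}
    (hf : Continuous f) (hx : ∀ t, HasDerivAt x (A (x t) + f t) t) (s t : ℝ) {k : ℝ → ℝ}
    (hk : Continuous k) (hfk : ∀ v ∈ Ι s t, ‖exp ((t - v) • A)‖ * ‖f v‖ ≤ k v) :
    ‖x t‖ ≤ ‖exp ((t - s) • A)‖ * ‖x s‖ + |∫ v in s..t, k v| := by
  rw [variation_of_constants A hf hx s t]
  refine (norm_add_le _ _).trans (add_le_add (ContinuousLinearMap.le_opNorm _ _) ?_)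
  refine norm_integral_le_abs_of_norm_le ?_ (hk.intervalIntegrable s t)
  filter_upwards [ae_restrict_mem measurableSet_uIoc] with v hv
  exact (ContinuousLinearMap.le_opNorm _ _).trans (hfk v hv)

theorem norm_le_add_mul_exp_of_expanding [CompleteSpace Y] (B : Y →L[ℝ] Y) {β γ c m : ℝ}
    (hB : ∀ t, 0 ≤ t → ‖exp ((-t) • B)‖ ≤ Real.exp (-(β * t))) (hγ : γ < β)
    {y g : ℝ → Y} (hg : Continuous g) (hy : ∀ t, HasDerivAt y (B (y t) + g t) t)
    (hg_le : ∀ t, 0 ≤ t → ‖g t‖ ≤ c * Real.exp (γ * t)) {t T : ℝ} (ht : 0 ≤ t) (htT : t ≤ T)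
    (hyT : ‖y T‖ ≤ m * Real.exp (γ * T)) :
    ‖y t‖ ≤ c / (β - γ) * Real.exp (γ * t) + m * Real.exp (β * t) * Real.exp ((γ - β) * T) := by
  obtain ⟨p, hp, rfl⟩ : ∃ p, p < 0 ∧ γ = β + p := ⟨γ - β, by linarith, by ring⟩
  have hc : 0 ≤ c := by simpa using (norm_nonneg _).trans (hg_le 0 le_rfl)
  have hnorm : ∀ v, t ≤ v → ‖exp ((t - v) • B)‖ ≤ Real.exp (-(β * (v - t))) := fun v hv => by
    simpa using hB (v - t) (by linarith)
  have hexp : ∀ K v, Real.exp (-(β * (v - t))) * (K * Real.exp ((β + p) * v)) =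
      K * Real.exp (β * t) / p * (p * Real.exp (p * v)) := fun K v => by
    rw [show -(β * (v - t)) = β * t - β * v by ring, show (β + p) * v = β * v + p * v by ring,
      Real.exp_sub, Real.exp_add]
    field_simp [hp.ne]
  have hvoc := norm_le_of_variation_of_constants B hg hy T t
      (k := fun v => c * Real.exp (β * t) / p * (p * Real.exp (p * v))) (by fun_prop) fun v hv => by
    rw [uIoc_of_ge htT] at hv
    exact hexp c v ▸ mul_le_mul (hnorm v hv.1.le) (hg_le v (by linarith [hv.1])) (norm_nonneg _)
      (Real.exp_pos _).le
  have hyT' := hexp m T ▸ mul_le_mul (hnorm T htT) hyT (norm_nonneg _) (Real.exp_pos _).le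
  have hpT : Real.exp (p * T) ≤ Real.exp (p * t) := Real.exp_le_exp.2 (by nlinarith)
  have hK : c * Real.exp (β * t) / p ≤ 0 := div_nonpos_of_nonneg_of_nonpos (by positivity) hp.le
  rw [intervalIntegral.integral_const_mul, integral_mul_exp_mul,
    abs_of_nonpos (mul_nonpos_of_nonpos_of_nonneg hK (sub_nonneg.2 hpT))] at hvoc
  rw [add_sub_cancel_left, show β - (β + p) = -p by ring, add_mul, Real.exp_add]
  have hmT : m * Real.exp (β * t) / p * (p * Real.exp (p * T)) =
      m * Real.exp (β * t) * Real.exp (p * T) := by field_simp [hp.ne]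
  have hct : c / -p * (Real.exp (β * t) * Real.exp (p * t)) =
      -(c * Real.exp (β * t) / p) * Real.exp (p * t) := by ring
  linarith [mul_nonpos_of_nonpos_of_nonneg hK (Real.exp_pos (p * T)).le]

theorem norm_le_div_mul_exp_of_expanding [CompleteSpace Y] (B : Y →L[ℝ] Y) {β γ c m : ℝ}
    (hB : ∀ t, 0 ≤ t → ‖exp ((-t) • B)‖ ≤ Real.exp (-(β * t))) (hγ : γ < β)
    {y g : ℝ → Y} (hg : Continuous g) (hy : ∀ t, HasDerivAt y (B (y t) + g t) t)
    (hy_le : ∀ t, 0 ≤ t → ‖y t‖ ≤ m * Real.exp (γ * t))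
    (hg_le : ∀ t, 0 ≤ t → ‖g t‖ ≤ c * Real.exp (γ * t)) (t : ℝ) (ht : 0 ≤ t) :
    ‖y t‖ ≤ c / (β - γ) * Real.exp (γ * t) := by
  have hlim : Tendsto (fun T => c / (β - γ) * Real.exp (γ * t) +
      m * Real.exp (β * t) * Real.exp ((γ - β) * T)) atTop
      (𝓝 (c / (β - γ) * Real.exp (γ * t))) := by
    simpa using tendsto_const_nhds.add ((Real.tendsto_exp_atBot.comp
      (tendsto_id.const_mul_atTop_of_neg (sub_neg.2 hγ))).const_mul (m * Real.exp (β * t)))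
  exact ge_of_tendsto hlim (eventually_atTop.2 ⟨t, fun T hT =>
    norm_le_add_mul_exp_of_expanding B hB hγ hg hy hg_le ht hT (hy_le T (ht.trans hT))⟩)

theorem norm_le_exp_mul_of_forcing_le [CompleteSpace X] (A : X →L[ℝ] X) {α δ K s : ℝ}
    (hA : ∀ t, 0 ≤ t → ‖exp (t • A)‖ ≤ Real.exp (α * t)) (hδ : 0 ≤ δ) (hK : 0 ≤ K) (hs : 0 ≤ s)
    {x f : ℝ → X} (hf : Continuous f) (hx : ∀ t, HasDerivAt x (A (x t) + f t) t)
    (hf_le : ∀ v ∈ Icc 0 s, ‖f v‖ ≤ δ * (K * Real.exp ((α + δ) * v))) :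
    ‖x s‖ ≤ Real.exp (α * s) * (‖x 0‖ + K * (Real.exp (δ * s) - 1)) := by
  have hfk : ∀ v ∈ Ι 0 s, ‖exp ((s - v) • A)‖ * ‖f v‖ ≤
      K * Real.exp (α * s) * (δ * Real.exp (δ * v)) := by
    intro v hv
    rw [uIoc_of_le hs] at hv
    calc ‖exp ((s - v) • A)‖ * ‖f v‖
        ≤ Real.exp (α * (s - v)) * (δ * (K * Real.exp ((α + δ) * v))) :=
          mul_le_mul (hA _ (by linarith [hv.2])) (hf_le v (Ioc_subset_Icc_self hv))
            (norm_nonneg _) (Real.exp_pos _).le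
      _ = K * Real.exp (α * s) * (δ * Real.exp (δ * v)) := by
          rw [show α * s = α * (s - v) + α * v by ring, show (α + δ) * v = α * v + δ * v by ring,
            Real.exp_add, Real.exp_add]
          ring
  have hvoc := norm_le_of_variation_of_constants A hf hx 0 s (by fun_prop) hfk
  rw [sub_zero, intervalIntegral.integral_const_mul, integral_mul_exp_mul, mul_zero,
    Real.exp_zero, abs_of_nonneg (mul_nonneg (by positivity)
      (sub_nonneg.2 (Real.one_le_exp (mul_nonneg hδ hs))))] at hvoc
  nlinarith [hA s hs, norm_nonneg (x 0)]

theorem norm_le_max_mul_exp_of_contracting [CompleteSpace X] (A : X →L[ℝ] X) {α δ b : ℝ}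
    (hA : ∀ t, 0 ≤ t → ‖exp (t • A)‖ ≤ Real.exp (α * t)) (hδ : 0 ≤ δ)
    {x f : ℝ → X} (hf : Continuous f) (hx : ∀ t, HasDerivAt x (A (x t) + f t) t)
    (hf_le : ∀ t, 0 ≤ t → ‖f t‖ ≤ δ * max ‖x t‖ (b * Real.exp ((α + δ) * t)))
    (T : ℝ) (hT : 0 ≤ T) :
    ‖x T‖ ≤ max ‖x 0‖ b * Real.exp ((α + δ) * T) := by
  set ψ : ℝ → ℝ := fun t => ‖x t‖ / Real.exp ((α + δ) * t)
  have hψ : Continuous ψ :=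
    (continuous_iff_continuousAt.2 fun t => (hx t).continuousAt).norm.div (by fun_prop)
      fun t => (Real.exp_pos _).ne'
  -- At a maximum point `s` of `ψ` on `[0, T]`, the forcing on `[0, s]` is controlled by `ψ s`.
  obtain ⟨s, ⟨hs₀, hsT⟩, hmax⟩ :=
    isCompact_Icc.exists_isMaxOn (nonempty_Icc.2 hT) hψ.continuousOn
  have hψs : ψ s * Real.exp (δ * s) ≤ ‖x 0‖ + max (ψ s) b * (Real.exp (δ * s) - 1) := by
    have hxs := norm_le_exp_mul_of_forcing_le A hA hδ
      ((div_nonneg (norm_nonneg _) (Real.exp_pos _).le).trans (le_max_left _ _)) hs₀ hf hx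
      fun v hv => (hf_le v hv.1).trans <| mul_le_mul_of_nonneg_left (by
        rw [max_mul_of_nonneg _ _ (Real.exp_pos _).le]
        exact max_le_max ((div_le_iff₀ (Real.exp_pos _)).1 (hmax ⟨hv.1, hv.2.trans hsT⟩)) le_rfl)
        hδ
    have hψx : ‖x s‖ = Real.exp (α * s) * (ψ s * Real.exp (δ * s)) := by
      rw [mul_left_comm, ← Real.exp_add, ← add_mul]
      exact (div_mul_cancel₀ _ (Real.exp_pos _).ne').symm
    refine le_of_mul_le_mul_left ?_ (Real.exp_pos (α * s))
    rwa [← hψx]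
  have hψ_le : ψ s ≤ max ‖x 0‖ b := by
    rcases le_total (ψ s) b with h | h
    · exact h.trans (le_max_right _ _)
    · rw [max_eq_left h] at hψs
      exact (by linarith : ψ s ≤ ‖x 0‖).trans (le_max_left _ _)
  calc ‖x T‖ = ψ T * Real.exp ((α + δ) * T) := (div_mul_cancel₀ _ (Real.exp_pos _).ne').symm
    _ ≤ max ‖x 0‖ b * Real.exp ((α + δ) * T) := by
        gcongr
        exact (hmax ⟨hT, le_rfl⟩).trans hψ_le

theorem norm_le_norm_fst_mul_exp_of_isBigO [CompleteSpace X] [CompleteSpace Y]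
    (A : X →L[ℝ] X) (B : Y →L[ℝ] Y) {α β δ : ℝ}
    (hA : ∀ t, 0 ≤ t → ‖exp (t • A)‖ ≤ Real.exp (α * t))
    (hB : ∀ t, 0 ≤ t → ‖exp ((-t) • B)‖ ≤ Real.exp (-(β * t)))
    (hδ : 0 ≤ δ) (hgap : 2 * δ < β - α) {u h : ℝ → X × Y} (hh : Continuous h)
    (hu : ∀ t, HasDerivAt u ((A (u t).1, B (u t).2) + h t) t) (hh_le : ∀ t, ‖h t‖ ≤ δ * ‖u t‖)
    (hgrowth : u =O[atTop] fun t => Real.exp ((α + δ) * t)) (t : ℝ) (ht : 0 ≤ t) :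
    ‖u t‖ ≤ ‖(u 0).1‖ * Real.exp ((α + δ) * t) := by
  have hx : ∀ τ, HasDerivAt (fun τ => (u τ).1) (A (u τ).1 + (h τ).1) τ := fun τ => by
    simpa [Function.comp_def] using hasFDerivAt_fst.comp_hasDerivAt τ (hu τ)
  have hy : ∀ τ, HasDerivAt (fun τ => (u τ).2) (B (u τ).2 + (h τ).2) τ := fun τ => by
    simpa [Function.comp_def] using hasFDerivAt_snd.comp_hasDerivAt τ (hu τ)
  obtain ⟨m, hm, hm_least⟩ := exists_isLeast_exp_bound
    (continuous_iff_continuousAt.2 fun τ => (hu τ).continuousAt) hgrowth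
  set ρ := δ / (β - (α + δ))
  have hρ : ρ < 1 := (div_lt_one (by linarith)).2 (by linarith)
  have hy_le : ∀ τ, 0 ≤ τ → ‖(u τ).2‖ ≤ ρ * m * Real.exp ((α + δ) * τ) := fun τ hτ => by
    rw [div_mul_eq_mul_div]
    exact norm_le_div_mul_exp_of_expanding B hB (by linarith) hh.snd hy
      (fun v hv => (norm_snd_le _).trans (hm v hv))
      (fun v hv => (norm_snd_le _).trans <| (hh_le v).trans <| by
        rw [mul_assoc]; gcongr; exact hm v hv) τ hτ
  have hx_le : ∀ τ, 0 ≤ τ → ‖(u τ).1‖ ≤ max ‖(u 0).1‖ (ρ * m) * Real.exp ((α + δ) * τ) :=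
    norm_le_max_mul_exp_of_contracting A hA hδ hh.fst hx fun v hv =>
      (norm_fst_le _).trans <| (hh_le v).trans (by rw [Prod.norm_def]; gcongr; exact hy_le v hv)
  have hm_le : m ≤ max ‖(u 0).1‖ (ρ * m) := hm_least fun τ hτ => by
    rw [Prod.norm_def]
    exact max_le (hx_le τ hτ) ((hy_le τ hτ).trans (by gcongr; exact le_max_right _ _))
  have hm₀ : 0 ≤ m := by simpa using (norm_nonneg _).trans (hm 0 le_rfl)
  have hm_fst : m ≤ ‖(u 0).1‖ := by
    rcases le_max_iff.1 hm_le with h | h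
    · exact h
    · nlinarith [norm_nonneg (u 0).1]
  exact (hm t ht).trans (by gcongr)

theorem norm_le_norm_snd_mul_exp_of_isBigO_atBot [CompleteSpace X] [CompleteSpace Y]
    (A : X →L[ℝ] X) (B : Y →L[ℝ] Y) {α β δ : ℝ}
    (hA : ∀ t, 0 ≤ t → ‖exp (t • A)‖ ≤ Real.exp (α * t))
    (hB : ∀ t, 0 ≤ t → ‖exp ((-t) • B)‖ ≤ Real.exp (-(β * t)))
    (hδ : 0 ≤ δ) (hgap : 2 * δ < β - α) {u h : ℝ → X × Y} (hh : Continuous h)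
    (hu : ∀ t, HasDerivAt u ((A (u t).1, B (u t).2) + h t) t) (hh_le : ∀ t, ‖h t‖ ≤ δ * ‖u t‖)
    (hgrowth : u =O[atBot] fun t => Real.exp ((β - δ) * t)) (t : ℝ) (ht : t ≤ 0) :
    ‖u t‖ ≤ ‖(u 0).2‖ * Real.exp ((β - δ) * t) := by
  have hrev := norm_le_norm_fst_mul_exp_of_isBigO (-B) (-A) (α := -β) (β := -α)
    (h := fun τ => -(h (-τ)).swap) (fun τ hτ => by simpa [neg_mul] using hB τ hτ)
    (fun τ hτ => by simpa using hA τ hτ) hδ (by linarith)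
    (continuous_swap.comp (hh.comp continuous_neg)).neg (hasDerivAt_swap_comp_neg hu)
    (fun τ => by rw [norm_neg, Prod.norm_swap, Prod.norm_swap]; exact hh_le _)
    (IsBigO.of_norm_left ?_) (-t) (by linarith)
  · simpa [Prod.norm_swap, show (-β + δ) * -t = (β - δ) * t by ring] using hrev
  · simp only [Prod.norm_swap]
    exact (hgrowth.comp_tendsto tendsto_neg_atTop_atBot).norm_left.congr_right fun τ => by
      simp only [Function.comp_apply]; ring_nf

end

/-- **Invariance of the leaves through the origin.** -/
theorem invariance_of_leaves_through_origin
    {X Y : Type*} [NormedAddCommGroup X] [NormedSpace ℝ X] [CompleteSpace X]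
    [NormedAddCommGroup Y] [NormedSpace ℝ Y] [CompleteSpace Y]
    (A : X →L[ℝ] X) (B : Y →L[ℝ] Y) (α β δ : ℝ)
    (F : X × Y → X) (G : X × Y → Y)
    (z : ℝ → X × Y → X × Y)
    (hA : ∀ t : ℝ, 0 ≤ t → ‖NormedSpace.exp (t • A)‖ ≤ Real.exp (α * t))
    (hB : ∀ t : ℝ, 0 ≤ t → ‖NormedSpace.exp ((-t) • B)‖ ≤ Real.exp (-(β * t)))
    (hδ : 0 ≤ δ)
    (hLip : ∀ w₁ w₂ : X × Y, ‖((F w₁, G w₁) : X × Y) - (F w₂, G w₂)‖ ≤ δ * ‖w₁ - w₂‖)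
    (hH0 : ((F 0, G 0) : X × Y) = 0)
    (hgap : 2 * δ < β - α)
    (hz0 : ∀ z₀ : X × Y, z 0 z₀ = z₀)
    (hode : ∀ (z₀ : X × Y) (t : ℝ),
      HasDerivAt (fun τ => z τ z₀)
        (((A (z t z₀).1, B (z t z₀).2) : X × Y) + (F (z t z₀), G (z t z₀))) t)
    (hflow : ∀ (z₀ : X × Y) (s t : ℝ), z t (z s z₀) = z (t + s) z₀) :
    (∀ z₀ : X × Y,
      (∀ t : ℝ, 0 ≤ t →
          ‖z t z₀ - z t ((0, 0) : X × Y)‖ ≤ ‖z₀ - ((0, 0) : X × Y)‖ * Real.exp ((α + δ) * t)) →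
      ∀ s : ℝ, ∀ t : ℝ, 0 ≤ t →
          ‖z t (z s z₀) - z t ((0, 0) : X × Y)‖
            ≤ ‖z s z₀ - ((0, 0) : X × Y)‖ * Real.exp ((α + δ) * t)) ∧
    (∀ z₀ : X × Y,
      (∀ t : ℝ, t ≤ 0 →
          ‖z t z₀ - z t ((0, 0) : X × Y)‖ ≤ ‖z₀ - ((0, 0) : X × Y)‖ * Real.exp ((β - δ) * t)) →
      ∀ s : ℝ, ∀ t : ℝ, t ≤ 0 →
          ‖z t (z s z₀) - z t ((0, 0) : X × Y)‖
            ≤ ‖z s z₀ - ((0, 0) : X × Y)‖ * Real.exp ((β - δ) * t)) := by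
  have hH : LipschitzWith (Real.toNNReal δ) fun w => ((F w, G w) : X × Y) :=
    .of_dist_le_mul fun w₁ w₂ => by simpa [dist_eq_norm, hδ] using hLip w₁ w₂
  have hH_le : ∀ w, ‖((F w, G w) : X × Y)‖ ≤ δ * ‖w‖ := fun w => by simpa [hH0] using hLip w 0
  have hzero : ∀ t, z t 0 = 0 := congrFun (ODE_solution_eq_zero A B hH hH0 (hode 0) (hz0 0))
  have hforcing : ∀ z₀, Continuous fun t => ((F (z t z₀), G (z t z₀)) : X × Y) := fun z₀ =>
    hH.continuous.comp (continuous_iff_continuousAt.2 fun t => (hode z₀ t).continuousAt)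
  simp only [Prod.mk_zero_zero, hzero, sub_zero]
  refine ⟨fun z₀ hM s t ht => ?_, fun z₀ hN s t ht => ?_⟩
  · have hgrowth : (fun τ => z τ (z s z₀)) =O[atTop] fun τ => Real.exp ((α + δ) * τ) :=
      .of_bound (‖z₀‖ * Real.exp ((α + δ) * s)) <| (eventually_ge_atTop (-s)).mono fun τ hτ => by
        rw [hflow, Real.norm_of_nonneg (Real.exp_pos _).le, mul_assoc, ← Real.exp_add, ← mul_add,
          add_comm s]
        exact hM _ (by linarith)
    exact (norm_le_norm_fst_mul_exp_of_isBigO A B hA hB hδ hgap (hforcing _)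
      (hode _) (fun _ => hH_le _) hgrowth t ht).trans (by rw [hz0]; gcongr; exact norm_fst_le _)
  · have hgrowth : (fun τ => z τ (z s z₀)) =O[atBot] fun τ => Real.exp ((β - δ) * τ) :=
      .of_bound (‖z₀‖ * Real.exp ((β - δ) * s)) <| (eventually_le_atBot (-s)).mono fun τ hτ => by
        rw [hflow, Real.norm_of_nonneg (Real.exp_pos _).le, mul_assoc, ← Real.exp_add, ← mul_add,
          add_comm s]
        exact hN _ (by linarith)
    exact (norm_le_norm_snd_mul_exp_of_isBigO_atBot A B hA hB hδ hgap (hforcing _)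
      (hode _) (fun _ => hH_le _) hgrowth t ht).trans (by rw [hz0]; gcongr; exact norm_snd_le _)
end

section
/- (Bound on the fixed point of T.) If φ ∈ F_σ is a fixed point of T_{z₀}(·, x), i.e. T_{z₀}(φ, x) = φ, then ‖φ‖_σ ≤ ‖x‖ / (1 − κ). -/
open MeasureTheory

noncomputable section

variable {X Y : Type*} [NormedAddCommGroup X] [NormedSpace ℝ X] [CompleteSpace X]
  [NormedAddCommGroup Y] [NormedSpace ℝ Y] [CompleteSpace Y]

/-- The weighted sup-norm `‖φ‖_σ = sup_{t ≥ 0} e^{-σ t} ‖φ t‖` on `[0,∞)`. -/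
noncomputable def normSigmaPos {E : Type*} [NormedAddCommGroup E] (σ : ℝ) (φ : ℝ → E) : ℝ :=
  sSup {r : ℝ | ∃ t : ℝ, 0 ≤ t ∧ r = Real.exp (-(σ * t)) * ‖φ t‖}

/-- Membership in the Banach space `F_σ` of continuous functions on `[0,∞)` with
finite weighted sup-norm. -/
def memFsigma {E : Type*} [NormedAddCommGroup E] (σ : ℝ) (φ : ℝ → E) : Prop :=
  ContinuousOn φ (Set.Ici 0) ∧
    BddAbove {r : ℝ | ∃ t : ℝ, 0 ≤ t ∧ r = Real.exp (-(σ * t)) * ‖φ t‖}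

/-- The Lyapunov–Perron map `T_{z₀}(φ, x)` for the stable foliation: the `X`-component is
`e^{tA} x + ∫₀^t e^{(t−s)A} [F(φ(s)+z(s,z₀)) − F(z(s,z₀))] ds` and the `Y`-component is
`−∫_t^∞ e^{(t−s)B} [G(φ(s)+z(s,z₀)) − G(z(s,z₀))] ds`. -/
noncomputable def Tmap (A : X →L[ℝ] X) (B : Y →L[ℝ] Y)
    (F : X × Y → X) (G : X × Y → Y) (z : ℝ → X × Y → X × Y) (z₀ : X × Y)
    (φ : ℝ → X × Y) (x : X) (t : ℝ) : X × Y :=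
  (NormedSpace.exp (t • A) x +
      ∫ s in (0:ℝ)..t, NormedSpace.exp ((t - s) • A) (F (φ s + z s z₀) - F (z s z₀)),
    -∫ s in Set.Ioi t, NormedSpace.exp ((t - s) • B) (G (φ s + z s z₀) - G (z s z₀)))

/-- The iterates `φ⁰(x)(t) = (e^{αt}(x − x₀), 0)`, `φ^{j+1}(x) = T_{z₀}(φ^j(x), x)`. -/
noncomputable def phiIter (A : X →L[ℝ] X) (B : Y →L[ℝ] Y)
    (F : X × Y → X) (G : X × Y → Y) (z : ℝ → X × Y → X × Y) (z₀ : X × Y) (α : ℝ) :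
    ℕ → X → ℝ → X × Y
  | 0 => fun x t => (Real.exp (α * t) • (x - z₀.1), (0 : Y))
  | j + 1 => fun x => Tmap A B F G z z₀ (phiIter A B F G z z₀ α j x) x

/-! For `t ≥ 0` the two Lyapunov–Perron integrals are controlled by the variation-of-constants
estimates `∫₀ᵗ e^{α(t-s)} e^{σs} ds ≤ e^{σt}/(σ-α)` and `∫ₜ^∞ e^{β(t-s)} e^{σs} ds = e^{σt}/(β-σ)`,
so `‖T(φ, x)(t)‖ ≤ (‖x‖ + κ‖φ‖_σ) e^{σt}`. At a fixed point this says
`‖φ‖_σ ≤ ‖x‖ + κ‖φ‖_σ`, and `κ < 1` by the choice of `σ`. -/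

open Real Set

lemma intervalIntegral_exp_mul_le {a : ℝ} (ha : 0 < a) (t : ℝ) :
    ∫ s in (0 : ℝ)..t, exp (a * s) ≤ exp (a * t) / a := by
  rw [intervalIntegral.integral_comp_mul_left (fun s => exp s) ha.ne', integral_exp, mul_zero,
    exp_zero, smul_eq_mul, inv_mul_eq_div]
  gcongr
  linarith

section VariationOfConstants

variable {E : Type*} [NormedAddCommGroup E] [NormedSpace ℝ E] {u : ℝ → E} {c σ t : ℝ}

lemma norm_intervalIntegral_exp_smul_le (A : E →L[ℝ] E) {α : ℝ}
    (hA : ∀ r : ℝ, 0 ≤ r → ‖NormedSpace.exp (r • A)‖ ≤ exp (α * r)) (hασ : α < σ)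
    (hc : 0 ≤ c) (ht : 0 ≤ t) (hu : ∀ s ∈ Ioc 0 t, ‖u s‖ ≤ c * exp (σ * s)) :
    ‖∫ s in (0 : ℝ)..t, NormedSpace.exp ((t - s) • A) (u s)‖ ≤ c / (σ - α) * exp (σ * t) := by
  have hbound : ∀ s ∈ Ioc 0 t, ‖NormedSpace.exp ((t - s) • A) (u s)‖
      ≤ c * exp (α * t) * exp ((σ - α) * s) := fun s hs => calc
    _ ≤ exp (α * (t - s)) * (c * exp (σ * s)) :=
      (NormedSpace.exp ((t - s) • A)).le_of_opNorm_le (hA _ (by linarith [hs.2])) _ |>.trans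
        (by gcongr; exact hu s hs)
    _ = c * exp (α * t) * exp ((σ - α) * s) := by
      rw [mul_left_comm, ← exp_add, mul_assoc, ← exp_add]; ring_nf
  calc _ ≤ ∫ s in (0 : ℝ)..t, c * exp (α * t) * exp ((σ - α) * s) :=
        intervalIntegral.norm_integral_le_of_norm_le ht (.of_forall hbound)
          (Continuous.intervalIntegrable (by fun_prop) _ _)
    _ ≤ c * exp (α * t) * (exp ((σ - α) * t) / (σ - α)) := by
      rw [intervalIntegral.integral_const_mul]
      gcongr
      exact intervalIntegral_exp_mul_le (by linarith) t
    _ = c / (σ - α) * exp (α * t + (σ - α) * t) := by rw [exp_add]; ring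
    _ = c / (σ - α) * exp (σ * t) := by ring_nf

lemma norm_integral_Ioi_exp_smul_le (B : E →L[ℝ] E) {β : ℝ}
    (hB : ∀ r : ℝ, 0 ≤ r → ‖NormedSpace.exp ((-r) • B)‖ ≤ exp (-(β * r))) (hσβ : σ < β)
    (hu : ∀ s ∈ Ioi t, ‖u s‖ ≤ c * exp (σ * s)) :
    ‖∫ s in Ioi t, NormedSpace.exp ((t - s) • B) (u s)‖ ≤ c / (β - σ) * exp (σ * t) := by
  have hbound : ∀ s ∈ Ioi t, ‖NormedSpace.exp ((t - s) • B) (u s)‖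
      ≤ c * exp (β * t) * exp ((σ - β) * s) := fun s hs => calc
    _ ≤ exp (-(β * (s - t))) * (c * exp (σ * s)) := by
      refine (NormedSpace.exp ((t - s) • B)).le_of_opNorm_le ?_ _ |>.trans
        (by gcongr; exact hu s hs)
      simpa only [neg_sub] using hB (s - t) (by linarith [mem_Ioi.mp hs])
    _ = c * exp (β * t) * exp ((σ - β) * s) := by
      rw [mul_left_comm, ← exp_add, mul_assoc, ← exp_add]; ring_nf
  calc _ ≤ ∫ s in Ioi t, c * exp (β * t) * exp ((σ - β) * s) :=
        norm_integral_le_of_norm_le ((integrableOn_exp_mul_Ioi (by linarith) t).const_mul _)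
          (ae_restrict_of_forall_mem measurableSet_Ioi hbound)
    _ = c / (β - σ) * exp (β * t + (σ - β) * t) := by
      rw [integral_const_mul, integral_exp_mul_Ioi (by linarith), neg_div, ← div_neg, neg_sub,
        exp_add]
      ring
    _ = c / (β - σ) * exp (σ * t) := by ring_nf

end VariationOfConstants

section WeightedNorm

variable {E : Type*} [NormedAddCommGroup E] {σ : ℝ} {φ : ℝ → E}

lemma norm_le_normSigmaPos_mul_exp
    (hφ : BddAbove {r : ℝ | ∃ t : ℝ, 0 ≤ t ∧ r = exp (-(σ * t)) * ‖φ t‖}) {t : ℝ} (ht : 0 ≤ t) :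
    ‖φ t‖ ≤ normSigmaPos σ φ * exp (σ * t) := by
  rw [← div_le_iff₀ (exp_pos _), div_eq_inv_mul, ← exp_neg]
  exact le_csSup hφ ⟨t, ht, rfl⟩

lemma normSigmaPos_le {C : ℝ} (h : ∀ t : ℝ, 0 ≤ t → ‖φ t‖ ≤ C * exp (σ * t)) :
    normSigmaPos σ φ ≤ C := by
  refine csSup_le ⟨_, 0, le_rfl, rfl⟩ ?_
  rintro _ ⟨t, ht, rfl⟩
  rw [exp_neg, inv_mul_le_iff₀ (exp_pos _), mul_comm]
  exact h t ht

end WeightedNorm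

lemma norm_Tmap_le {X Y : Type*} [NormedAddCommGroup X] [NormedSpace ℝ X]
    [NormedAddCommGroup Y] [NormedSpace ℝ Y] (A : X →L[ℝ] X) (B : Y →L[ℝ] Y) {α β δ σ κ N : ℝ}
    (F : X × Y → X) (G : X × Y → Y) (z : ℝ → X × Y → X × Y) (z₀ : X × Y) (x : X)
    {φ : ℝ → X × Y}
    (hA : ∀ t : ℝ, 0 ≤ t → ‖NormedSpace.exp (t • A)‖ ≤ exp (α * t))
    (hB : ∀ t : ℝ, 0 ≤ t → ‖NormedSpace.exp ((-t) • B)‖ ≤ exp (-(β * t)))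
    (hδ : 0 ≤ δ)
    (hLip : ∀ w₁ w₂ : X × Y, ‖((F w₁, G w₁) : X × Y) - (F w₂, G w₂)‖ ≤ δ * ‖w₁ - w₂‖)
    (hσ : σ ∈ Ioo α β) (hκα : δ / (σ - α) ≤ κ) (hκβ : δ / (β - σ) ≤ κ)
    (hφ : ∀ s : ℝ, 0 ≤ s → ‖φ s‖ ≤ N * exp (σ * s)) {t : ℝ} (ht : 0 ≤ t) :
    ‖Tmap A B F G z z₀ φ x t‖ ≤ (‖x‖ + κ * N) * exp (σ * t) := by
  obtain ⟨hασ, hσβ⟩ := hσ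
  have hN : 0 ≤ N := by simpa using (norm_nonneg _).trans (hφ 0 le_rfl)
  have hdiff : ∀ s : ℝ, 0 ≤ s → ‖F (φ s + z s z₀) - F (z s z₀)‖ ≤ δ * N * exp (σ * s) ∧
      ‖G (φ s + z s z₀) - G (z s z₀)‖ ≤ δ * N * exp (σ * s) := fun s hs => by
    have h : ‖((F (φ s + z s z₀), G (φ s + z s z₀)) : X × Y) - (F (z s z₀), G (z s z₀))‖
        ≤ δ * N * exp (σ * s) := calc
      _ ≤ δ * ‖φ s‖ := by simpa using hLip (φ s + z s z₀) (z s z₀)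
      _ ≤ δ * N * exp (σ * s) := by rw [mul_assoc]; gcongr; exact hφ s hs
    exact ⟨(norm_fst_le _).trans h, (norm_snd_le _).trans h⟩
  have hfst := norm_intervalIntegral_exp_smul_le A hA hασ (mul_nonneg hδ hN) ht
    fun s hs => (hdiff s hs.1.le).1
  have hsnd := norm_integral_Ioi_exp_smul_le B hB hσβ
    fun s hs => (hdiff s (ht.trans (le_of_lt hs))).2
  rw [mul_div_right_comm] at hfst hsnd
  refine max_le ?_ ?_
  · calc _ ≤ exp (α * t) * ‖x‖ + δ / (σ - α) * N * exp (σ * t) :=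
          (norm_add_le _ _).trans (add_le_add ((NormedSpace.exp (t • A)).le_of_opNorm_le
            (hA t ht) x) hfst)
      _ ≤ exp (σ * t) * ‖x‖ + κ * N * exp (σ * t) := by gcongr
      _ = (‖x‖ + κ * N) * exp (σ * t) := by ring
  · calc _ ≤ δ / (β - σ) * N * exp (σ * t) := (norm_neg _).trans_le hsnd
      _ ≤ κ * N * exp (σ * t) := by gcongr
      _ ≤ (‖x‖ + κ * N) * exp (σ * t) := by gcongr; linarith [norm_nonneg x]

theorem fixed_point_bound_general
    {X Y : Type*} [NormedAddCommGroup X] [NormedSpace ℝ X]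
    [NormedAddCommGroup Y] [NormedSpace ℝ Y]
(A : X →L[ℝ] X) (B : Y →L[ℝ] Y) (α β δ σ κ : ℝ)
    (F : X × Y → X) (G : X × Y → Y)
    (z : ℝ → X × Y → X × Y) (z₀ : X × Y)
    (hA : ∀ t : ℝ, 0 ≤ t → ‖NormedSpace.exp (t • A)‖ ≤ Real.exp (α * t))
    (hB : ∀ t : ℝ, 0 ≤ t → ‖NormedSpace.exp ((-t) • B)‖ ≤ Real.exp (-(β * t)))
    (hδ : 0 ≤ δ)
    (hLip : ∀ w₁ w₂ : X × Y, ‖((F w₁, G w₁) : X × Y) - (F w₂, G w₂)‖ ≤ δ * ‖w₁ - w₂‖)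
    (hσ : σ ∈ Set.Ioo (α + δ) (β - δ))
    (hκ : κ = max (δ / (β - σ)) (δ / (σ - α)))
    (x : X) (φ : ℝ → X × Y)
    (hφmem : memFsigma σ φ)
    (hfix : ∀ t : ℝ, 0 ≤ t → Tmap A B F G z z₀ φ x t = φ t) :
    normSigmaPos σ φ ≤ ‖x‖ / (1 - κ) := by
  obtain ⟨hασ, hσβ⟩ := hσ
  have hκ1 : κ < 1 := hκ ▸ max_lt ((div_lt_one (by linarith)).2 (by linarith))
    ((div_lt_one (by linarith)).2 (by linarith))
  have hN : normSigmaPos σ φ ≤ ‖x‖ + κ * normSigmaPos σ φ := normSigmaPos_le fun t ht => by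
    rw [← hfix t ht]
    exact norm_Tmap_le A B F G z z₀ x hA hB hδ hLip ⟨by linarith, by linarith⟩
      (hκ ▸ le_max_right _ _) (hκ ▸ le_max_left _ _)
      (fun s hs => norm_le_normSigmaPos_mul_exp hφmem.2 hs) ht
  rw [le_div_iff₀ (by linarith)]
  linarith

/-- **Bound on the fixed point of T.** -/
theorem fixed_point_bound
    {X Y : Type*} [NormedAddCommGroup X] [NormedSpace ℝ X] [CompleteSpace X]
    [NormedAddCommGroup Y] [NormedSpace ℝ Y] [CompleteSpace Y]
(A : X →L[ℝ] X) (B : Y →L[ℝ] Y) (α β δ σ κ : ℝ)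
    (F : X × Y → X) (G : X × Y → Y)
    (z : ℝ → X × Y → X × Y) (z₀ : X × Y)
    (hA : ∀ t : ℝ, 0 ≤ t → ‖NormedSpace.exp (t • A)‖ ≤ Real.exp (α * t))
    (hB : ∀ t : ℝ, 0 ≤ t → ‖NormedSpace.exp ((-t) • B)‖ ≤ Real.exp (-(β * t)))
    (hδ : 0 ≤ δ)
    (hLip : ∀ w₁ w₂ : X × Y, ‖((F w₁, G w₁) : X × Y) - (F w₂, G w₂)‖ ≤ δ * ‖w₁ - w₂‖)
    (hH0 : ((F 0, G 0) : X × Y) = 0)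
    (hgap : 2 * δ < β - α)
    (hz0 : ∀ w : X × Y, z 0 w = w)
    (hode : ∀ (w : X × Y) (t : ℝ),
      HasDerivAt (fun τ => z τ w)
        (((A (z t w).1, B (z t w).2) : X × Y) + (F (z t w), G (z t w))) t)
    (hσ : σ ∈ Set.Ioo (α + δ) (β - δ))
    (hκ : κ = max (δ / (β - σ)) (δ / (σ - α)))
    (x : X) (φ : ℝ → X × Y)
    (hφmem : memFsigma σ φ)
    (hfix : ∀ t : ℝ, 0 ≤ t → Tmap A B F G z z₀ φ x t = φ t) :
    normSigmaPos σ φ ≤ ‖x‖ / (1 - κ) :=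
  fixed_point_bound_general A B α β δ σ κ F G z z₀ hA hB hδ hLip hσ hκ x φ hφmem hfix
end
end

section
/- (Lipschitz bound for the approximate stable-leaf maps Φ^j.) For every j ≥ 1 and all x₁, x₂ ∈ X one has ‖Φ^j(x₁) − Φ^j(x₂)‖ ≤ (δ/(β−σ)) · (1/(1−κ)) · ‖x₁ − x₂‖. -/
/-!
For `φ₁, φ₂ ∈ F_σ` the variation-of-constants integrals in `T_{z₀}` gain the factors
`δ / (σ - α)` (forward integral along `A`) and `δ / (β - σ)` (backward integral along `B`), so
`‖T(φ₁, x₁) - T(φ₂, x₂)‖_σ ≤ ‖x₁ - x₂‖ + κ ‖φ₁ - φ₂‖_σ`. By induction on `j` this gives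
`‖φ^j(x₁) - φ^j(x₂)‖_σ ≤ ‖x₁ - x₂‖ / (1 - κ)`, and the `Y`-component of one more application of
`T` at `t = 0` only picks up the factor `δ / (β - σ)`.
-/

open MeasureTheory

noncomputable section

variable {X Y : Type*} [NormedAddCommGroup X] [NormedSpace ℝ X] [CompleteSpace X]
  [NormedAddCommGroup Y] [NormedSpace ℝ Y] [CompleteSpace Y]

-- Instance search does not find this `ℚ`-structure, which the lemmas on `NormedSpace.exp` require.
noncomputable instance ContinuousLinearMap.normedAlgebraRat {E : Type*} [NormedAddCommGroup E]
    [NormedSpace ℝ E] : NormedAlgebra ℚ (E →L[ℝ] E) :=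
  NormedAlgebra.restrictScalars ℚ ℝ _

open Set

section ExponentialDichotomy

variable {E : Type*} [NormedAddCommGroup E] [NormedSpace ℝ E]

theorem exp_sub_smul [CompleteSpace E] (A : E →L[ℝ] E) (t s : ℝ) :
    NormedSpace.exp ((t - s) • A) = NormedSpace.exp (t • A) * NormedSpace.exp ((-s) • A) := by
  rw [sub_eq_add_neg, add_smul]
  exact NormedSpace.exp_add_of_commute (((Commute.refl A).smul_left t).smul_right (-s))

theorem continuous_exp_smul [CompleteSpace E] (A : E →L[ℝ] E) :
    Continuous fun t : ℝ => NormedSpace.exp (t • A) :=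
  NormedSpace.exp_continuous.comp (continuous_id.smul continuous_const)

theorem continuousOn_primitive_Ici {u : ℝ → E} (hu : ContinuousOn u (Ici 0)) :
    ContinuousOn (fun t => ∫ s in (0 : ℝ)..t, u s) (Ici 0) := by
  intro t ht
  have hIcc : ContinuousWithinAt (fun b => ∫ s in (0 : ℝ)..b, u s) (Icc 0 (t + 1)) t := by
    refine intervalIntegral.continuousWithinAt_primitive (measure_singleton t) ?_
    rw [min_self, max_eq_right (by linarith [mem_Ici.1 ht])]
    exact (hu.mono Icc_subset_Ici_self).intervalIntegrable_of_Icc (by linarith [mem_Ici.1 ht])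
  refine hIcc.mono_of_mem_nhdsWithin ?_
  rw [← Ici_inter_Iic]
  exact inter_mem_nhdsWithin _ (Iic_mem_nhds (by linarith))

theorem continuousOn_intervalIntegral_exp_sub_smul_apply [CompleteSpace E] (A : E →L[ℝ] E)
    {u : ℝ → E} (hu : ContinuousOn u (Ici 0)) :
    ContinuousOn (fun t => ∫ s in (0 : ℝ)..t, NormedSpace.exp ((t - s) • A) (u s)) (Ici 0) := by
  have hv : ContinuousOn (fun s => NormedSpace.exp ((-s) • A) (u s)) (Ici 0) :=
    ((continuous_exp_smul A).comp continuous_neg).continuousOn.clm_apply hu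
  refine ((continuous_exp_smul A).continuousOn.clm_apply
    (continuousOn_primitive_Ici hv)).congr fun t ht => ?_
  simp_rw [exp_sub_smul A t, mul_apply_eq_comp]
  exact ContinuousLinearMap.intervalIntegral_comp_comm _ <|
    (hv.mono Icc_subset_Ici_self).intervalIntegrable_of_Icc (mem_Ici.1 ht)

theorem continuousOn_integral_Ioi_exp_sub_smul_apply [CompleteSpace E] (B : E →L[ℝ] E)
    {g : ℝ → E} (hg : ContinuousOn g (Ici 0))
    (hint : IntegrableOn (fun s => NormedSpace.exp ((-s) • B) (g s)) (Ioi 0)) :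
    ContinuousOn (fun t => ∫ s in Ioi t, NormedSpace.exp ((t - s) • B) (g s)) (Ici 0) := by
  have hv : ContinuousOn (fun s => NormedSpace.exp ((-s) • B) (g s)) (Ici 0) :=
    ((continuous_exp_smul B).comp continuous_neg).continuousOn.clm_apply hg
  refine ((continuous_exp_smul B).continuousOn.clm_apply
    ((continuousOn_const (c := ∫ s in Ioi 0, NormedSpace.exp ((-s) • B) (g s))).sub
      (continuousOn_primitive_Ici hv))).congr fun t ht => ?_
  -- `∫ s in Ioi t = ∫ s in Ioi 0 - ∫ s in 0..t`, which is continuous in `t`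
  simp only [exp_sub_smul B t, mul_apply_eq_comp, Pi.sub_apply]
  rw [← intervalIntegral.integral_Ioi_sub_Ioi hint (mem_Ici.1 ht), sub_sub_cancel]
  exact ContinuousLinearMap.integral_comp_comm _ (hint.mono_set (Ioi_subset_Ioi (mem_Ici.1 ht)))

theorem norm_exp_sub_smul_apply_le {M : E →L[ℝ] E} {c σ K t s : ℝ} {v : E}
    (hM : ‖NormedSpace.exp ((t - s) • M)‖ ≤ Real.exp (c * (t - s)))
    (hv : ‖v‖ ≤ K * Real.exp (σ * s)) :
    ‖NormedSpace.exp ((t - s) • M) v‖ ≤ K * Real.exp (c * t) * Real.exp ((σ - c) * s) := by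
  have hexp : Real.exp (c * (t - s)) * Real.exp (σ * s)
      = Real.exp (c * t) * Real.exp ((σ - c) * s) := by
    rw [← Real.exp_add, ← Real.exp_add]; ring_nf
  calc ‖NormedSpace.exp ((t - s) • M) v‖ ≤ ‖NormedSpace.exp ((t - s) • M)‖ * ‖v‖ :=
        ContinuousLinearMap.le_opNorm _ _
    _ ≤ Real.exp (c * (t - s)) * (K * Real.exp (σ * s)) :=
        mul_le_mul hM hv (norm_nonneg _) (Real.exp_nonneg _)
    _ = K * Real.exp (c * t) * Real.exp ((σ - c) * s) := by rw [mul_left_comm, hexp, mul_assoc]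

theorem norm_exp_sub_smul_le_of_le {B : E →L[ℝ] E} {β t s : ℝ}
    (hB : ∀ τ : ℝ, 0 ≤ τ → ‖NormedSpace.exp ((-τ) • B)‖ ≤ Real.exp (-(β * τ))) (hts : t ≤ s) :
    ‖NormedSpace.exp ((t - s) • B)‖ ≤ Real.exp (β * (t - s)) := by
  have := hB (s - t) (sub_nonneg.2 hts)
  rwa [neg_sub, show -(β * (s - t)) = β * (t - s) by ring] at this

theorem integral_exp_mul {c : ℝ} (hc : c ≠ 0) (a b : ℝ) :
    ∫ s in a..b, Real.exp (c * s) = (Real.exp (c * b) - Real.exp (c * a)) / c := by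
  rw [intervalIntegral.integral_comp_mul_left (fun x => Real.exp x) hc, integral_exp, smul_eq_mul,
    inv_mul_eq_div]

theorem norm_intervalIntegral_exp_sub_smul_apply_le [CompleteSpace E] {A : E →L[ℝ] E}
    {α σ K t : ℝ} {u : ℝ → E}
    (hA : ∀ τ : ℝ, 0 ≤ τ → ‖NormedSpace.exp (τ • A)‖ ≤ Real.exp (α * τ)) (hασ : α < σ)
    (huK : ∀ s, 0 ≤ s → ‖u s‖ ≤ K * Real.exp (σ * s)) (ht : 0 ≤ t) :
    ‖∫ s in (0 : ℝ)..t, NormedSpace.exp ((t - s) • A) (u s)‖ ≤ K / (σ - α) * Real.exp (σ * t) := by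
  have hK : 0 ≤ K := by simpa using (norm_nonneg _).trans (huK 0 le_rfl)
  have hbound : ∀ s ∈ Ioc 0 t, ‖NormedSpace.exp ((t - s) • A) (u s)‖
      ≤ K * Real.exp (α * t) * Real.exp ((σ - α) * s) := fun s hs =>
    norm_exp_sub_smul_apply_le (hA _ (sub_nonneg.2 hs.2)) (huK s hs.1.le)
  have hexp : Real.exp (α * t) * Real.exp ((σ - α) * t) = Real.exp (σ * t) := by
    rw [← Real.exp_add]; ring_nf
  calc ‖∫ s in (0 : ℝ)..t, NormedSpace.exp ((t - s) • A) (u s)‖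
      ≤ ∫ s in (0 : ℝ)..t, K * Real.exp (α * t) * Real.exp ((σ - α) * s) :=
        intervalIntegral.norm_integral_le_of_norm_le ht (.of_forall hbound)
          (Continuous.intervalIntegrable (by fun_prop) _ _)
    _ = K * Real.exp (α * t) * ((Real.exp ((σ - α) * t) - 1) / (σ - α)) := by
        rw [intervalIntegral.integral_const_mul, integral_exp_mul (sub_ne_zero.2 hασ.ne'),
          mul_zero, Real.exp_zero]
    _ ≤ K * Real.exp (α * t) * (Real.exp ((σ - α) * t) / (σ - α)) := by
        gcongr
        linarith
    _ = K / (σ - α) * Real.exp (σ * t) := by rw [← hexp]; ring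

theorem integrableOn_Ioi_exp_sub_smul_apply [CompleteSpace E] {B : E →L[ℝ] E}
    {β σ K t : ℝ} {g : ℝ → E}
    (hB : ∀ τ : ℝ, 0 ≤ τ → ‖NormedSpace.exp ((-τ) • B)‖ ≤ Real.exp (-(β * τ))) (hσβ : σ < β)
    (hg : ContinuousOn g (Ici 0)) (hgK : ∀ s, 0 ≤ s → ‖g s‖ ≤ K * Real.exp (σ * s))
    (ht : 0 ≤ t) :
    IntegrableOn (fun s => NormedSpace.exp ((t - s) • B) (g s)) (Ioi t) := by
  have hcont : ContinuousOn (fun s => NormedSpace.exp ((t - s) • B) (g s)) (Ioi t) :=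
    (((continuous_exp_smul B).comp (continuous_const.sub continuous_id)).continuousOn.clm_apply
      hg).mono fun s hs => mem_Ici.2 (ht.trans (le_of_lt hs))
  refine Integrable.mono' ((integrableOn_exp_mul_Ioi (sub_neg.2 hσβ) t).const_mul
    (K * Real.exp (β * t))) (hcont.aestronglyMeasurable measurableSet_Ioi) ?_
  exact (ae_restrict_iff' measurableSet_Ioi).2 (.of_forall fun s hs =>
    norm_exp_sub_smul_apply_le (norm_exp_sub_smul_le_of_le hB (le_of_lt hs))
      (hgK s (ht.trans (le_of_lt hs))))

theorem norm_integral_Ioi_exp_sub_smul_apply_le {B : E →L[ℝ] E} {β σ K t : ℝ} {g : ℝ → E}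
    (hB : ∀ τ : ℝ, 0 ≤ τ → ‖NormedSpace.exp ((-τ) • B)‖ ≤ Real.exp (-(β * τ))) (hσβ : σ < β)
    (hgK : ∀ s, 0 ≤ s → ‖g s‖ ≤ K * Real.exp (σ * s)) (ht : 0 ≤ t) :
    ‖∫ s in Ioi t, NormedSpace.exp ((t - s) • B) (g s)‖ ≤ K / (β - σ) * Real.exp (σ * t) := by
  have hbound : ∀ᵐ s ∂volume.restrict (Ioi t), ‖NormedSpace.exp ((t - s) • B) (g s)‖
      ≤ K * Real.exp (β * t) * Real.exp ((σ - β) * s) :=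
    (ae_restrict_iff' measurableSet_Ioi).2 (.of_forall fun s hs =>
      norm_exp_sub_smul_apply_le (norm_exp_sub_smul_le_of_le hB (le_of_lt hs))
        (hgK s (ht.trans (le_of_lt hs))))
  have hexp : Real.exp (β * t) * Real.exp ((σ - β) * t) = Real.exp (σ * t) := by
    rw [← Real.exp_add]; ring_nf
  refine (norm_integral_le_of_norm_le ((integrableOn_exp_mul_Ioi (sub_neg.2 hσβ) t).const_mul
    (K * Real.exp (β * t))) hbound).trans_eq ?_
  rw [integral_const_mul, integral_exp_mul_Ioi (sub_neg.2 hσβ), ← hexp, ← neg_sub β σ,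
    neg_div_neg_eq]
  ring

end ExponentialDichotomy

theorem continuous_of_norm_sub_le {E W : Type*} [SeminormedAddCommGroup E]
    [SeminormedAddCommGroup W] {f : E → W} {δ : ℝ} (hf : ∀ a b, ‖f a - f b‖ ≤ δ * ‖a - b‖) :
    Continuous f :=
  (LipschitzWith.of_dist_le' (K := δ) fun a b => by
    simpa only [dist_eq_norm] using hf a b).continuous

section Perturbation

variable {E W : Type*} [SeminormedAddCommGroup E] [SeminormedAddCommGroup W]
  {f : E → W} {δ σ : ℝ} {w : ℝ → E}

theorem norm_comp_add_sub_sub_le (hf : ∀ a b, ‖f a - f b‖ ≤ δ * ‖a - b‖) (hδ : 0 ≤ δ)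
    {φ ψ : ℝ → E} {D : ℝ} (h : ∀ s, 0 ≤ s → ‖φ s - ψ s‖ ≤ D * Real.exp (σ * s)) (s : ℝ)
    (hs : 0 ≤ s) :
    ‖(f (φ s + w s) - f (w s)) - (f (ψ s + w s) - f (w s))‖ ≤ δ * D * Real.exp (σ * s) := by
  calc ‖(f (φ s + w s) - f (w s)) - (f (ψ s + w s) - f (w s))‖ ≤ δ * ‖φ s - ψ s‖ := by
        simpa only [sub_sub_sub_cancel_right, add_sub_add_right_eq_sub]
          using hf (φ s + w s) (ψ s + w s)
    _ ≤ δ * (D * Real.exp (σ * s)) := mul_le_mul_of_nonneg_left (h s hs) hδ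
    _ = δ * D * Real.exp (σ * s) := (mul_assoc _ _ _).symm

theorem norm_comp_add_sub_le (hf : ∀ a b, ‖f a - f b‖ ≤ δ * ‖a - b‖) (hδ : 0 ≤ δ)
    {φ : ℝ → E} {C : ℝ} (h : ∀ s, 0 ≤ s → ‖φ s‖ ≤ C * Real.exp (σ * s)) (s : ℝ) (hs : 0 ≤ s) :
    ‖f (φ s + w s) - f (w s)‖ ≤ δ * C * Real.exp (σ * s) := by
  simpa using norm_comp_add_sub_sub_le (w := w) hf hδ (ψ := 0) (by simpa using h) s hs

end Perturbation

theorem memFsigma.exists_norm_le {E : Type*} [NormedAddCommGroup E] {σ : ℝ} {φ : ℝ → E}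
    (h : memFsigma σ φ) : ∃ C, ∀ t, 0 ≤ t → ‖φ t‖ ≤ C * Real.exp (σ * t) := by
  obtain ⟨C, hC⟩ := h.2
  refine ⟨C, fun t ht => ?_⟩
  have := hC ⟨t, ht, rfl⟩
  rwa [Real.exp_neg, inv_mul_le_iff₀ (Real.exp_pos _), mul_comm] at this

theorem memFsigma_of_norm_le {E : Type*} [NormedAddCommGroup E] {σ C : ℝ} {φ : ℝ → E}
    (hφ : ContinuousOn φ (Ici 0)) (hC : ∀ t, 0 ≤ t → ‖φ t‖ ≤ C * Real.exp (σ * t)) :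
    memFsigma σ φ := by
  refine ⟨hφ, C, ?_⟩
  rintro _ ⟨t, ht, rfl⟩
  rw [Real.exp_neg, inv_mul_le_iff₀ (Real.exp_pos _), mul_comm]
  exact hC t ht

theorem integrableOn_Ioi_exp_sub_smul_comp_add_sub {E V : Type*} [NormedAddCommGroup E]
    [NormedAddCommGroup V] [NormedSpace ℝ V] [CompleteSpace V] {B : V →L[ℝ] V} {G : E → V}
    {β δ σ : ℝ} {w : ℝ → E}
    (hB : ∀ t : ℝ, 0 ≤ t → ‖NormedSpace.exp ((-t) • B)‖ ≤ Real.exp (-(β * t)))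
    (hG : ∀ a b, ‖G a - G b‖ ≤ δ * ‖a - b‖) (hδ : 0 ≤ δ) (hw : Continuous w)
    (hσβ : σ < β) {φ : ℝ → E} (hφ : memFsigma σ φ) {t : ℝ} (ht : 0 ≤ t) :
    IntegrableOn
      (fun s => NormedSpace.exp ((t - s) • B) (G (φ s + w s) - G (w s))) (Ioi t) := by
  obtain ⟨C, hC⟩ := hφ.exists_norm_le
  have hGc := continuous_of_norm_sub_le hG
  have hφc := hφ.1
  exact integrableOn_Ioi_exp_sub_smul_apply hB hσβ (by fun_prop)
    (norm_comp_add_sub_le hG hδ hC) ht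

section LyapunovPerron

variable {X Y : Type*} [NormedAddCommGroup X] [NormedSpace ℝ X] [NormedAddCommGroup Y]
  [NormedSpace ℝ Y] {A : X →L[ℝ] X} {B : Y →L[ℝ] Y} {F : X × Y → X} {G : X × Y → Y}
  {z : ℝ → X × Y → X × Y} {z₀ : X × Y} {α β δ σ : ℝ}

theorem Tmap_zero : Tmap A B F G z z₀ 0 0 = 0 := by
  ext t <;> simp [Tmap]

theorem Tmap_sub_fst {φ₁ φ₂ : ℝ → X × Y} {x₁ x₂ : X} {t : ℝ}
    (h₁ : IntervalIntegrable
      (fun s => NormedSpace.exp ((t - s) • A) (F (φ₁ s + z s z₀) - F (z s z₀))) volume 0 t)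
    (h₂ : IntervalIntegrable
      (fun s => NormedSpace.exp ((t - s) • A) (F (φ₂ s + z s z₀) - F (z s z₀))) volume 0 t) :
    (Tmap A B F G z z₀ φ₁ x₁ t - Tmap A B F G z z₀ φ₂ x₂ t).1
      = NormedSpace.exp (t • A) (x₁ - x₂) + ∫ s in (0 : ℝ)..t, NormedSpace.exp ((t - s) • A)
          ((F (φ₁ s + z s z₀) - F (z s z₀)) - (F (φ₂ s + z s z₀) - F (z s z₀))) := by
  simp only [Tmap, Prod.fst_sub]
  rw [map_sub, add_sub_add_comm, ← intervalIntegral.integral_sub h₁ h₂]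
  simp only [map_sub]

theorem Tmap_sub_snd {φ₁ φ₂ : ℝ → X × Y} {x₁ x₂ : X} {t : ℝ}
    (h₁ : IntegrableOn
      (fun s => NormedSpace.exp ((t - s) • B) (G (φ₁ s + z s z₀) - G (z s z₀))) (Ioi t))
    (h₂ : IntegrableOn
      (fun s => NormedSpace.exp ((t - s) • B) (G (φ₂ s + z s z₀) - G (z s z₀))) (Ioi t)) :
    (Tmap A B F G z z₀ φ₁ x₁ t - Tmap A B F G z z₀ φ₂ x₂ t).2
      = -∫ s in Ioi t, NormedSpace.exp ((t - s) • B)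
          ((G (φ₁ s + z s z₀) - G (z s z₀)) - (G (φ₂ s + z s z₀) - G (z s z₀))) := by
  simp only [Tmap, Prod.snd_sub]
  rw [neg_sub_neg, ← integral_sub h₂ h₁, ← integral_neg]
  simp only [map_sub, neg_sub]

theorem norm_Tmap_sub_fst_le [CompleteSpace X]
    (hA : ∀ t : ℝ, 0 ≤ t → ‖NormedSpace.exp (t • A)‖ ≤ Real.exp (α * t))
    (hF : ∀ a b, ‖F a - F b‖ ≤ δ * ‖a - b‖) (hδ : 0 ≤ δ) (hz : Continuous fun s => z s z₀)
    (hασ : α < σ) {φ₁ φ₂ : ℝ → X × Y} (h₁ : ContinuousOn φ₁ (Ici 0))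
    (h₂ : ContinuousOn φ₂ (Ici 0)) {D : ℝ}
    (hD : ∀ s, 0 ≤ s → ‖φ₁ s - φ₂ s‖ ≤ D * Real.exp (σ * s)) (x₁ x₂ : X) {t : ℝ} (ht : 0 ≤ t) :
    ‖(Tmap A B F G z z₀ φ₁ x₁ t - Tmap A B F G z z₀ φ₂ x₂ t).1‖
      ≤ (‖x₁ - x₂‖ + δ * D / (σ - α)) * Real.exp (σ * t) := by
  have hFc := continuous_of_norm_sub_le hF
  have hint : ∀ φ : ℝ → X × Y, ContinuousOn φ (Ici 0) → IntervalIntegrable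
      (fun s => NormedSpace.exp ((t - s) • A) (F (φ s + z s z₀) - F (z s z₀))) volume 0 t :=
    fun φ hφ => ContinuousOn.intervalIntegrable_of_Icc ht <| ContinuousOn.mono
      (((continuous_exp_smul A).comp (continuous_const.sub continuous_id)).continuousOn.clm_apply
        (by fun_prop)) Icc_subset_Ici_self
  have hexp : Real.exp (α * t) ≤ Real.exp (σ * t) :=
    Real.exp_le_exp.2 (mul_le_mul_of_nonneg_right hασ.le ht)
  rw [Tmap_sub_fst (hint φ₁ h₁) (hint φ₂ h₂)]
  calc _ ≤ ‖NormedSpace.exp (t • A) (x₁ - x₂)‖ + ‖∫ s in (0 : ℝ)..t, NormedSpace.exp ((t - s) • A)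
          ((F (φ₁ s + z s z₀) - F (z s z₀)) - (F (φ₂ s + z s z₀) - F (z s z₀)))‖ := norm_add_le _ _
    _ ≤ Real.exp (α * t) * ‖x₁ - x₂‖ + δ * D / (σ - α) * Real.exp (σ * t) :=
        add_le_add ((ContinuousLinearMap.le_opNorm _ _).trans
            (mul_le_mul_of_nonneg_right (hA t ht) (norm_nonneg _)))
          (norm_intervalIntegral_exp_sub_smul_apply_le hA hασ
            (norm_comp_add_sub_sub_le hF hδ hD) ht)
    _ ≤ (‖x₁ - x₂‖ + δ * D / (σ - α)) * Real.exp (σ * t) := by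
        nlinarith [norm_nonneg (x₁ - x₂)]

theorem norm_Tmap_sub_snd_le [CompleteSpace Y]
    (hB : ∀ t : ℝ, 0 ≤ t → ‖NormedSpace.exp ((-t) • B)‖ ≤ Real.exp (-(β * t)))
    (hG : ∀ a b, ‖G a - G b‖ ≤ δ * ‖a - b‖) (hδ : 0 ≤ δ) (hz : Continuous fun s => z s z₀)
    (hσβ : σ < β) {φ₁ φ₂ : ℝ → X × Y} (h₁ : memFsigma σ φ₁) (h₂ : memFsigma σ φ₂) {D : ℝ}
    (hD : ∀ s, 0 ≤ s → ‖φ₁ s - φ₂ s‖ ≤ D * Real.exp (σ * s)) (x₁ x₂ : X) {t : ℝ} (ht : 0 ≤ t) :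
    ‖(Tmap A B F G z z₀ φ₁ x₁ t - Tmap A B F G z z₀ φ₂ x₂ t).2‖
      ≤ δ * D / (β - σ) * Real.exp (σ * t) := by
  rw [Tmap_sub_snd (integrableOn_Ioi_exp_sub_smul_comp_add_sub hB hG hδ hz hσβ h₁ ht)
    (integrableOn_Ioi_exp_sub_smul_comp_add_sub hB hG hδ hz hσβ h₂ ht), norm_neg]
  exact norm_integral_Ioi_exp_sub_smul_apply_le hB hσβ (norm_comp_add_sub_sub_le hG hδ hD) ht

theorem norm_Tmap_sub_le [CompleteSpace X] [CompleteSpace Y] {κ : ℝ}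
    (hA : ∀ t : ℝ, 0 ≤ t → ‖NormedSpace.exp (t • A)‖ ≤ Real.exp (α * t))
    (hB : ∀ t : ℝ, 0 ≤ t → ‖NormedSpace.exp ((-t) • B)‖ ≤ Real.exp (-(β * t)))
    (hF : ∀ a b, ‖F a - F b‖ ≤ δ * ‖a - b‖) (hG : ∀ a b, ‖G a - G b‖ ≤ δ * ‖a - b‖)
    (hδ : 0 ≤ δ) (hz : Continuous fun s => z s z₀) (hασ : α < σ) (hσβ : σ < β)
    (hκβ : δ / (β - σ) ≤ κ) (hκα : δ / (σ - α) ≤ κ)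
    {φ₁ φ₂ : ℝ → X × Y} (h₁ : memFsigma σ φ₁) (h₂ : memFsigma σ φ₂) {D : ℝ}
    (hD : ∀ s, 0 ≤ s → ‖φ₁ s - φ₂ s‖ ≤ D * Real.exp (σ * s)) (x₁ x₂ : X) {t : ℝ} (ht : 0 ≤ t) :
    ‖Tmap A B F G z z₀ φ₁ x₁ t - Tmap A B F G z z₀ φ₂ x₂ t‖
      ≤ (‖x₁ - x₂‖ + κ * D) * Real.exp (σ * t) := by
  have hD0 : 0 ≤ D := by simpa using (norm_nonneg _).trans (hD 0 le_rfl)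
  refine norm_prod_le_iff.2 ⟨(norm_Tmap_sub_fst_le hA hF hδ hz hασ h₁.1 h₂.1 hD x₁ x₂ ht).trans ?_,
    (norm_Tmap_sub_snd_le hB hG hδ hz hσβ h₁ h₂ hD x₁ x₂ ht).trans ?_⟩
  · rw [mul_div_right_comm]
    gcongr
  · rw [mul_div_right_comm]
    have := mul_le_mul_of_nonneg_right hκβ hD0
    gcongr
    linarith [norm_nonneg (x₁ - x₂)]

theorem continuousOn_Tmap [CompleteSpace X] [CompleteSpace Y]
    (hB : ∀ t : ℝ, 0 ≤ t → ‖NormedSpace.exp ((-t) • B)‖ ≤ Real.exp (-(β * t)))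
    (hFc : Continuous F) (hG : ∀ a b, ‖G a - G b‖ ≤ δ * ‖a - b‖) (hδ : 0 ≤ δ)
    (hz : Continuous fun s => z s z₀) (hσβ : σ < β) {φ : ℝ → X × Y} (hφ : memFsigma σ φ)
    (x : X) : ContinuousOn (Tmap A B F G z z₀ φ x) (Ici 0) := by
  have hGc := continuous_of_norm_sub_le hG
  have hφc := hφ.1
  have hint := integrableOn_Ioi_exp_sub_smul_comp_add_sub hB hG hδ hz hσβ hφ le_rfl
  simp only [zero_sub] at hint
  exact (((continuous_exp_smul A).clm_apply continuous_const).continuousOn.add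
    (continuousOn_intervalIntegral_exp_sub_smul_apply A (by fun_prop))).prodMk
    (continuousOn_integral_Ioi_exp_sub_smul_apply B (by fun_prop) hint).neg

theorem memFsigma_Tmap [CompleteSpace X] [CompleteSpace Y]
    (hA : ∀ t : ℝ, 0 ≤ t → ‖NormedSpace.exp (t • A)‖ ≤ Real.exp (α * t))
    (hB : ∀ t : ℝ, 0 ≤ t → ‖NormedSpace.exp ((-t) • B)‖ ≤ Real.exp (-(β * t)))
    (hF : ∀ a b, ‖F a - F b‖ ≤ δ * ‖a - b‖) (hG : ∀ a b, ‖G a - G b‖ ≤ δ * ‖a - b‖)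
    (hδ : 0 ≤ δ) (hz : Continuous fun s => z s z₀) (hασ : α < σ) (hσβ : σ < β)
    {φ : ℝ → X × Y} (hφ : memFsigma σ φ) (x : X) : memFsigma σ (Tmap A B F G z z₀ φ x) := by
  obtain ⟨C, hC⟩ := hφ.exists_norm_le
  have h0 : memFsigma σ (0 : ℝ → X × Y) :=
    memFsigma_of_norm_le continuousOn_const (C := 0) (by simp)
  refine memFsigma_of_norm_le (C := ‖x‖ + max (δ / (β - σ)) (δ / (σ - α)) * C)
    (continuousOn_Tmap hB (continuous_of_norm_sub_le hF) hG hδ hz hσβ hφ x) fun t ht => ?_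
  -- the growth of `T(φ, x)` is its distance to `T(0, 0) = 0`
  simpa only [Tmap_zero, Pi.zero_apply, sub_zero] using norm_Tmap_sub_le hA hB hF hG hδ hz hασ hσβ
    (le_max_left _ _) (le_max_right _ _) hφ h0 (by simpa using hC) x 0 ht

end LyapunovPerron

theorem norm_exp_smul_prod_zero_le {E V : Type*} [NormedAddCommGroup E] [NormedSpace ℝ E]
    [NormedAddCommGroup V] {α σ t : ℝ} (hασ : α < σ) (ht : 0 ≤ t) (v : E) :
    ‖((Real.exp (α * t) • v, 0) : E × V)‖ ≤ ‖v‖ * Real.exp (σ * t) := by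
  rw [Prod.norm_mk, norm_zero, max_eq_left (norm_nonneg _), norm_smul, Real.norm_of_nonneg
    (Real.exp_nonneg _), mul_comm]
  gcongr

section Iterates

variable {X Y : Type*} [NormedAddCommGroup X] [NormedSpace ℝ X] [CompleteSpace X]
  [NormedAddCommGroup Y] [NormedSpace ℝ Y] [CompleteSpace Y] {A : X →L[ℝ] X} {B : Y →L[ℝ] Y}
  {F : X × Y → X} {G : X × Y → Y} {z : ℝ → X × Y → X × Y} {z₀ : X × Y} {α β δ σ : ℝ}

theorem memFsigma_phiIter
    (hA : ∀ t : ℝ, 0 ≤ t → ‖NormedSpace.exp (t • A)‖ ≤ Real.exp (α * t))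
    (hB : ∀ t : ℝ, 0 ≤ t → ‖NormedSpace.exp ((-t) • B)‖ ≤ Real.exp (-(β * t)))
    (hF : ∀ a b, ‖F a - F b‖ ≤ δ * ‖a - b‖) (hG : ∀ a b, ‖G a - G b‖ ≤ δ * ‖a - b‖)
    (hδ : 0 ≤ δ) (hz : Continuous fun s => z s z₀) (hασ : α < σ) (hσβ : σ < β) (j : ℕ) (x : X) :
    memFsigma σ (phiIter A B F G z z₀ α j x) := by
  induction j with
  | zero =>
    exact memFsigma_of_norm_le (Continuous.continuousOn (by simp only [phiIter]; fun_prop))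
      fun t ht => norm_exp_smul_prod_zero_le hασ ht _
  | succ j ih => exact memFsigma_Tmap hA hB hF hG hδ hz hασ hσβ ih x

theorem norm_phiIter_sub_le {κ : ℝ}
    (hA : ∀ t : ℝ, 0 ≤ t → ‖NormedSpace.exp (t • A)‖ ≤ Real.exp (α * t))
    (hB : ∀ t : ℝ, 0 ≤ t → ‖NormedSpace.exp ((-t) • B)‖ ≤ Real.exp (-(β * t)))
    (hF : ∀ a b, ‖F a - F b‖ ≤ δ * ‖a - b‖) (hG : ∀ a b, ‖G a - G b‖ ≤ δ * ‖a - b‖)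
    (hδ : 0 ≤ δ) (hz : Continuous fun s => z s z₀) (hασ : α < σ) (hσβ : σ < β)
    (hκβ : δ / (β - σ) ≤ κ) (hκα : δ / (σ - α) ≤ κ) (hκ : κ < 1) (j : ℕ) (x₁ x₂ : X) :
    ∀ t, 0 ≤ t → ‖phiIter A B F G z z₀ α j x₁ t - phiIter A B F G z z₀ α j x₂ t‖
      ≤ ‖x₁ - x₂‖ / (1 - κ) * Real.exp (σ * t) := by
  have hκ0 : 0 ≤ κ := (div_nonneg hδ (sub_pos.2 hσβ).le).trans hκβ
  induction j with
  | zero =>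
    intro t ht
    have hsub : phiIter A B F G z z₀ α 0 x₁ t - phiIter A B F G z z₀ α 0 x₂ t
        = (Real.exp (α * t) • (x₁ - x₂), 0) := by
      simp only [phiIter, Prod.mk_sub_mk, ← smul_sub, sub_sub_sub_cancel_right, sub_zero]
    rw [hsub]
    refine (norm_exp_smul_prod_zero_le hασ ht _).trans ?_
    gcongr
    exact le_div_self (norm_nonneg _) (by linarith) (by linarith)
  | succ j ih =>
    intro t ht
    -- `‖x₁ - x₂‖ / (1 - κ)` is the fixed point of `L ↦ ‖x₁ - x₂‖ + κ L`
    refine (norm_Tmap_sub_le hA hB hF hG hδ hz hασ hσβ hκβ hκα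
      (memFsigma_phiIter hA hB hF hG hδ hz hασ hσβ j x₁)
      (memFsigma_phiIter hA hB hF hG hδ hz hασ hσβ j x₂) ih x₁ x₂ ht).trans_eq ?_
    field_simp [(sub_pos.2 hκ).ne']
    ring

end Iterates

theorem approximate_stable_leaf_lipschitz_general
    {X Y : Type*} [NormedAddCommGroup X] [NormedSpace ℝ X] [CompleteSpace X]
    [NormedAddCommGroup Y] [NormedSpace ℝ Y] [CompleteSpace Y]
(A : X →L[ℝ] X) (B : Y →L[ℝ] Y) (α β δ σ κ : ℝ)
    (F : X × Y → X) (G : X × Y → Y)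
    (z : ℝ → X × Y → X × Y) (z₀ : X × Y)
    (hA : ∀ t : ℝ, 0 ≤ t → ‖NormedSpace.exp (t • A)‖ ≤ Real.exp (α * t))
    (hB : ∀ t : ℝ, 0 ≤ t → ‖NormedSpace.exp ((-t) • B)‖ ≤ Real.exp (-(β * t)))
    (hδ : 0 ≤ δ)
    (hLip : ∀ w₁ w₂ : X × Y, ‖((F w₁, G w₁) : X × Y) - (F w₂, G w₂)‖ ≤ δ * ‖w₁ - w₂‖)
    (hode : ∀ (w : X × Y) (t : ℝ),
      HasDerivAt (fun τ => z τ w)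
        (((A (z t w).1, B (z t w).2) : X × Y) + (F (z t w), G (z t w))) t)
    (hσ : σ ∈ Set.Ioo (α + δ) (β - δ))
    (hκ : κ = max (δ / (β - σ)) (δ / (σ - α))) :
    ∀ j : ℕ, 1 ≤ j → ∀ x₁ x₂ : X,
      ‖(z₀.2 + (phiIter A B F G z z₀ α j x₁ 0).2)
          - (z₀.2 + (phiIter A B F G z z₀ α j x₂ 0).2)‖
        ≤ δ / (β - σ) * (1 / (1 - κ)) * ‖x₁ - x₂‖ := by
  have hF : ∀ a b, ‖F a - F b‖ ≤ δ * ‖a - b‖ := fun a b => (norm_fst_le _).trans (hLip a b)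
  have hG : ∀ a b, ‖G a - G b‖ ≤ δ * ‖a - b‖ := fun a b => (norm_snd_le _).trans (hLip a b)
  have hz : Continuous fun s => z s z₀ :=
    continuous_iff_continuousAt.2 fun t => (hode z₀ t).continuousAt
  have hασ : α < σ := by linarith [hσ.1]
  have hσβ : σ < β := by linarith [hσ.2]
  have hκ1 : κ < 1 := hκ ▸ max_lt ((div_lt_one (sub_pos.2 hσβ)).2 (by linarith [hσ.2]))
    ((div_lt_one (sub_pos.2 hασ)).2 (by linarith [hσ.1]))
  intro j hj x₁ x₂
  obtain ⟨m, rfl⟩ := Nat.exists_eq_add_of_le' hj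
  rw [add_sub_add_left_eq_sub, ← Prod.snd_sub]
  calc _ ≤ δ * (‖x₁ - x₂‖ / (1 - κ)) / (β - σ) * Real.exp (σ * 0) :=
        norm_Tmap_sub_snd_le hB hG hδ hz hσβ (memFsigma_phiIter hA hB hF hG hδ hz hασ hσβ m x₁)
          (memFsigma_phiIter hA hB hF hG hδ hz hασ hσβ m x₂)
          (norm_phiIter_sub_le hA hB hF hG hδ hz hασ hσβ (hκ ▸ le_max_left _ _)
            (hκ ▸ le_max_right _ _) hκ1 m x₁ x₂) x₁ x₂ le_rfl
    _ = δ / (β - σ) * (1 / (1 - κ)) * ‖x₁ - x₂‖ := by rw [mul_zero, Real.exp_zero]; ring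

/-- **Lipschitz bound for the approximate stable-leaf maps Φ^j.** -/
theorem approximate_stable_leaf_lipschitz
    {X Y : Type*} [NormedAddCommGroup X] [NormedSpace ℝ X] [CompleteSpace X]
    [NormedAddCommGroup Y] [NormedSpace ℝ Y] [CompleteSpace Y]
(A : X →L[ℝ] X) (B : Y →L[ℝ] Y) (α β δ σ κ : ℝ)
    (F : X × Y → X) (G : X × Y → Y)
    (z : ℝ → X × Y → X × Y) (z₀ : X × Y)
    (hA : ∀ t : ℝ, 0 ≤ t → ‖NormedSpace.exp (t • A)‖ ≤ Real.exp (α * t))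
    (hB : ∀ t : ℝ, 0 ≤ t → ‖NormedSpace.exp ((-t) • B)‖ ≤ Real.exp (-(β * t)))
    (hδ : 0 ≤ δ)
    (hLip : ∀ w₁ w₂ : X × Y, ‖((F w₁, G w₁) : X × Y) - (F w₂, G w₂)‖ ≤ δ * ‖w₁ - w₂‖)
    (hH0 : ((F 0, G 0) : X × Y) = 0)
    (hgap : 2 * δ < β - α)
    (hz0 : ∀ w : X × Y, z 0 w = w)
    (hode : ∀ (w : X × Y) (t : ℝ),
      HasDerivAt (fun τ => z τ w)
        (((A (z t w).1, B (z t w).2) : X × Y) + (F (z t w), G (z t w))) t)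
    (hσ : σ ∈ Set.Ioo (α + δ) (β - δ))
    (hκ : κ = max (δ / (β - σ)) (δ / (σ - α))) :
    ∀ j : ℕ, 1 ≤ j → ∀ x₁ x₂ : X,
      ‖(z₀.2 + (phiIter A B F G z z₀ α j x₁ 0).2)
          - (z₀.2 + (phiIter A B F G z z₀ α j x₂ 0).2)‖
        ≤ δ / (β - σ) * (1 / (1 - κ)) * ‖x₁ - x₂‖ :=
  approximate_stable_leaf_lipschitz_general A B α β δ σ κ F G z z₀ hA hB hδ hLip hode hσ hκ
end
end

section
/- (Cone Invariance Property.) Let z₁, z₂ ∈ Z with z₁ ≠ z₂, and set u(t) := x(t, z₁) − x(t, z₂) and v(t) := y(t, z₁) − y(t, z₂). Then one of the following holds: (i) ‖v(t)‖ < ‖u(t)‖ for all t ∈ ℝ; (ii) ‖v(t)‖ > ‖u(t)‖ for all t ∈ ℝ; (iii) there exists t₀ ∈ ℝ such that ‖v(t)‖ < ‖u(t)‖ for all t < t₀, ‖v(t₀)‖ = ‖u(t₀)‖, and ‖v(t)‖ > ‖u(t)‖ for all t > t₀. -/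
/-!
Let `u`, `v` be the components of the difference of the two trajectories. Comparing `u (x + h)`
with `exp (h • A) (u x)` to first order, and `v x` with `exp (-h • B) (v (x + h))`, the
semigroup bounds give the one-sided Dini estimates `D⁺‖u‖ ≤ α ‖u‖ + ‖ΔF‖` and `D₊‖v‖ ≥ β ‖v‖ - ‖ΔG‖`, with `‖ΔF‖, ‖ΔG‖ ≤ δ max ‖u‖ ‖v‖`.
Inside the cone `‖u‖ ≤ ‖v‖` this yields `D⁺ (‖u‖ - ‖v‖) ≤ α (‖u‖ - ‖v‖) - (β - α - 2δ) ‖v‖`,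
which is `< α (‖u‖ - ‖v‖)` because `v ≠ 0` there, by uniqueness of solutions. A comparison with
an exponential then shows that `‖u‖ - ‖v‖` is strictly negative at all times after it first
becomes `≤ 0`, and the trichotomy follows by looking at the first such time.
-/

open Filter Topology Set

theorem eventually_slope_lt_of_le_add_norm {E : Type*} [NormedAddCommGroup E] [NormedSpace ℝ E]
    {g φ : ℝ → ℝ} {q : ℝ → E} {x φ' r : ℝ} {w : E}
    (hφ : HasDerivAt φ φ' x) (hq : HasDerivAt q w x) (hq0 : q x = 0) (hgx : g x = φ x)
    (hle : ∀ y, x < y → g y ≤ φ y + ‖q y‖) (hr : φ' + ‖w‖ < r) :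
    ∀ᶠ y in 𝓝[>] x, slope g x y < r := by
  obtain ⟨r₁, r₂, hr₁, hr₂, rfl⟩ : ∃ r₁ r₂, φ' < r₁ ∧ ‖w‖ < r₂ ∧ r = r₁ + r₂ :=
    ⟨φ' + (r - φ' - ‖w‖) / 2, ‖w‖ + (r - φ' - ‖w‖) / 2, by linarith, by linarith, by ring⟩
  filter_upwards [hφ.hasDerivWithinAt.limsup_slope_le' (lt_irrefl x) hr₁,
    hq.hasDerivWithinAt.limsup_slope_norm_le hr₂, self_mem_nhdsWithin] with y hφy hqy (hxy : x < y)
  have hpos : 0 < y - x := sub_pos.2 hxy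
  rw [hq0, norm_zero, sub_zero, Real.norm_of_nonneg hpos.le, inv_mul_eq_div] at hqy
  rw [slope_def_field] at hφy ⊢
  calc (g y - g x) / (y - x) ≤ (φ y - φ x) / (y - x) + ‖q y‖ / (y - x) := by
        rw [← add_div, hgx]
        exact div_le_div_of_nonneg_right (by linarith [hle y hxy]) hpos.le
    _ < r₁ + r₂ := add_lt_add hφy hqy

section ExpBound

variable {E : Type*} [NormedAddCommGroup E] [NormedSpace ℝ E] [CompleteSpace E]
  {T : E →L[ℝ] E} {θ : ℝ} {p : ℝ → E} {x r : ℝ} {w : E}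

theorem eventually_slope_norm_lt_of_exp_bound
    (hT : ∀ h : ℝ, 0 ≤ h → ‖NormedSpace.exp (h • T)‖ ≤ Real.exp (θ * h))
    (hp : HasDerivAt p (T (p x) + w) x) (hr : θ * ‖p x‖ + ‖w‖ < r) :
    ∀ᶠ y in 𝓝[>] x, slope (fun t => ‖p t‖) x y < r := by
  have hφ : HasDerivAt (fun y => Real.exp (θ * (y - x)) * ‖p x‖) (θ * ‖p x‖) x := by
    simpa using (((hasDerivAt_id x).sub_const x).const_mul θ).exp.mul_const ‖p x‖
  have hexp : HasDerivAt (fun y => NormedSpace.exp ((y - x) • T)) T x := by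
    simpa [Function.comp_def] using (hasDerivAt_exp_smul_const T (x - x)).scomp
      (h := fun y => y - x) x ((hasDerivAt_id' x).sub_const x)
  have hq : HasDerivAt (fun y => p y - NormedSpace.exp ((y - x) • T) (p x)) w x := by
    simpa using hp.fun_sub (hexp.clm_apply (hasDerivAt_const x (p x)))
  refine eventually_slope_lt_of_le_add_norm hφ hq (by simp) (by simp) (fun y hxy => ?_) hr
  calc ‖p y‖ = ‖NormedSpace.exp ((y - x) • T) (p x)
        + (p y - NormedSpace.exp ((y - x) • T) (p x))‖ := by rw [add_sub_cancel]
    _ ≤ ‖NormedSpace.exp ((y - x) • T)‖ * ‖p x‖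
        + ‖p y - NormedSpace.exp ((y - x) • T) (p x)‖ :=
      (norm_add_le _ _).trans (add_le_add_left (ContinuousLinearMap.le_opNorm _ _) _)
    _ ≤ _ := by gcongr; exact hT _ (sub_nonneg.2 hxy.le)

theorem eventually_lt_slope_norm_of_exp_bound
    (hT : ∀ h : ℝ, 0 ≤ h → ‖NormedSpace.exp ((-h) • T)‖ ≤ Real.exp (-(θ * h)))
    (hp : HasDerivAt p (T (p x) + w) x) (hr : r < θ * ‖p x‖ - ‖w‖) :
    ∀ᶠ y in 𝓝[>] x, r < slope (fun t => ‖p t‖) x y := by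
  have hgrowth : HasDerivAt (fun y => Real.exp (θ * (y - x))) θ x := by
    simpa using (((hasDerivAt_id x).sub_const x).const_mul θ).exp
  have hexp : HasDerivAt (fun y => NormedSpace.exp ((x - y) • T)) (-T) x := by
    simpa [Function.comp_def] using (hasDerivAt_exp_smul_const T (x - x)).scomp
      (h := fun y => x - y) x ((hasDerivAt_id' x).const_sub x)
  have hq : HasDerivAt
      (fun y => Real.exp (θ * (y - x)) • (NormedSpace.exp ((x - y) • T) (p y) - p x)) w x := by
    simpa using hgrowth.fun_smul ((hexp.clm_apply hp).sub_const (p x))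
  have hle : ∀ y, x < y → -‖p y‖ ≤ -(Real.exp (θ * (y - x)) * ‖p x‖)
      + ‖Real.exp (θ * (y - x)) • (NormedSpace.exp ((x - y) • T) (p y) - p x)‖ := by
    intro y hxy
    have hback : ‖NormedSpace.exp ((x - y) • T) (p y)‖ ≤ Real.exp (-(θ * (y - x))) * ‖p y‖ := by
      refine (ContinuousLinearMap.le_opNorm _ _).trans
        (mul_le_mul_of_nonneg_right ?_ (norm_nonneg _))
      simpa using hT (y - x) (sub_nonneg.2 hxy.le)
    have hpx := mul_le_mul_of_nonneg_left
      ((norm_le_insert (NormedSpace.exp ((x - y) • T) (p y)) (p x)).trans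
        (add_le_add_left hback _))
      (Real.exp_pos (θ * (y - x))).le
    rw [mul_add, ← mul_assoc, ← Real.exp_add, add_neg_cancel, Real.exp_zero, one_mul] at hpx
    rw [norm_smul, Real.norm_of_nonneg (Real.exp_pos _).le]
    linarith
  filter_upwards [eventually_slope_lt_of_le_add_norm (g := fun t => -‖p t‖)
    (hgrowth.mul_const ‖p x‖).neg hq (by simp) (by simp) hle
    (show -(θ * ‖p x‖) + ‖w‖ < -r by linarith)] with y hy
  rw [slope_def_field] at hy ⊢
  rw [← neg_sub', neg_div] at hy
  linarith

end ExpBound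

theorem eventually_slope_norm_sub_norm_lt
    {X Y : Type*} [NormedAddCommGroup X] [NormedSpace ℝ X] [CompleteSpace X]
    [NormedAddCommGroup Y] [NormedSpace ℝ Y] [CompleteSpace Y]
    {A : X →L[ℝ] X} {B : Y →L[ℝ] Y} {α β δ : ℝ}
    (hA : ∀ t : ℝ, 0 ≤ t → ‖NormedSpace.exp (t • A)‖ ≤ Real.exp (α * t))
    (hB : ∀ t : ℝ, 0 ≤ t → ‖NormedSpace.exp ((-t) • B)‖ ≤ Real.exp (-(β * t)))
    (hgap : 2 * δ < β - α) {u : ℝ → X} {v : ℝ → Y} {x : ℝ} {a : X} {b : Y}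
    (hu : HasDerivAt u (A (u x) + a) x) (hv : HasDerivAt v (B (v x) + b) x)
    (ha : ‖a‖ ≤ δ * ‖v x‖) (hb : ‖b‖ ≤ δ * ‖v x‖) (hv0 : v x ≠ 0) :
    ∀ᶠ y in 𝓝[>] x, slope (fun t => ‖u t‖ - ‖v t‖) x y < α * (‖u x‖ - ‖v x‖) := by
  have hε : 0 < (β - α - 2 * δ) * ‖v x‖ := mul_pos (by linarith) (norm_pos_iff.2 hv0)
  filter_upwards
    [eventually_slope_norm_lt_of_exp_bound hA hu
      (r := α * ‖u x‖ + δ * ‖v x‖ + (β - α - 2 * δ) * ‖v x‖ / 2) (by linarith),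
    eventually_lt_slope_norm_of_exp_bound hB hv
      (r := β * ‖v x‖ - δ * ‖v x‖ - (β - α - 2 * δ) * ‖v x‖ / 2) (by linarith)]
    with y hu_slope hv_slope
  rw [slope_def_field] at hu_slope hv_slope ⊢
  rw [sub_sub_sub_comm, sub_div]
  linarith

theorem le_mul_exp_of_slope_lt_mul_self {f : ℝ → ℝ} {α : ℝ} (hf : Continuous f)
    (hslope : ∀ x, f x ≤ 0 → ∀ᶠ y in 𝓝[>] x, slope f x y < α * f x)
    {s t : ℝ} (hs : f s < 0) (hst : s ≤ t) : f t ≤ f s * Real.exp ((α - 1) * (t - s)) := by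
  -- `B` solves `B' = (α - 1) B < α B`, so it stays above `f`, whose slope is below `α f`.
  set B : ℝ → ℝ := fun y => f s * Real.exp ((α - 1) * (y - s))
  have hB_neg : ∀ y, B y < 0 := fun y => mul_neg_of_neg_of_pos hs (Real.exp_pos _)
  have hB_deriv : ∀ y, HasDerivAt B ((α - 1) * B y) y := fun y =>
    ((((hasDerivAt_id' y).sub_const s).const_mul (α - 1)).exp.const_mul (f s)).congr_deriv
      (by simp only [B]; ring)
  have hB_cont : Continuous B := continuous_iff_continuousAt.2 fun y => (hB_deriv y).continuousAt
  have hle : Icc s t ⊆ {y | f y ≤ B y} := by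
    refine IsClosed.Icc_subset_of_forall_mem_nhdsWithin
      ((isClosed_le hf hB_cont).inter isClosed_Icc) (by simp [B]) fun x ⟨hx, _⟩ => ?_
    rcases (show f x ≤ B x from hx).lt_or_eq with hlt | heq
    · exact nhdsWithin_le_nhds ((hf.continuousAt.eventually_lt hB_cont.continuousAt hlt).mono
        fun _ h => le_of_lt h)
    have hB_slope : ∀ᶠ y in 𝓝[>] x, α * f x < slope B x y :=
      ((hasDerivWithinAt_iff_tendsto_slope' (lt_irrefl x)).1
        (hB_deriv x).hasDerivWithinAt).eventually (lt_mem_nhds (by rw [heq]; linarith [hB_neg x]))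
    filter_upwards [hslope x (heq ▸ (hB_neg x).le), hB_slope, self_mem_nhdsWithin]
      with y hfy hBy (hxy : x < y)
    rw [slope_def_field] at hfy hBy
    show f y ≤ B y
    linarith [(div_lt_div_iff_of_pos_right (sub_pos.2 hxy)).1 (hfy.trans hBy)]
  exact hle ⟨hst, le_rfl⟩

theorem lt_zero_of_slope_lt_mul_self {f : ℝ → ℝ} {α : ℝ} (hf : Continuous f)
    (hslope : ∀ x, f x ≤ 0 → ∀ᶠ y in 𝓝[>] x, slope f x y < α * f x)
    {s t : ℝ} (hs : f s ≤ 0) (hst : s < t) : f t < 0 := by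
  have hneg_near : ∀ᶠ y in 𝓝[>] s, f y < 0 := by
    rcases hs.lt_or_eq with hs | hs
    · exact nhdsWithin_le_nhds (hf.continuousAt.eventually_lt continuousAt_const hs)
    · filter_upwards [hslope s hs.le, self_mem_nhdsWithin] with y hy (hsy : s < y)
      rwa [hs, mul_zero, slope_neg_iff_of_le hsy.le, hs] at hy
  obtain ⟨s', hs', hs't⟩ := (hneg_near.and (Ioo_mem_nhdsGT hst)).exists
  exact (le_mul_exp_of_slope_lt_mul_self hf hslope hs' hs't.2.le).trans_lt
    (mul_neg_of_neg_of_pos hs' (Real.exp_pos _))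

theorem lt_or_gt_or_crossing {a b : ℝ → ℝ} (ha : Continuous a) (hb : Continuous b)
    (hcross : ∀ s t, a s ≤ b s → s < t → a t < b t) :
    (∀ t, b t < a t) ∨ (∀ t, a t < b t) ∨
      ∃ t₀, (∀ t, t < t₀ → b t < a t) ∧ b t₀ = a t₀ ∧ ∀ t, t₀ < t → a t < b t := by
  by_cases hgt : ∀ t, b t < a t
  · exact Or.inl hgt
  by_cases hle : ∀ t, a t ≤ b t
  · exact Or.inr (Or.inl fun t => hcross (t - 1) t (hle _) (sub_one_lt t))
  push Not at hgt hle
  obtain ⟨s, hs⟩ := hgt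
  obtain ⟨r, hr⟩ := hle
  set S := {t | a t ≤ b t}
  have hS_bdd : BddBelow S := ⟨r, fun x hx => not_lt.1 fun hxr => (hcross x r hx hxr).not_gt hr⟩
  have ht₀ : sInf S ∈ S := (isClosed_le ha hb).csInf_mem ⟨s, hs⟩ hS_bdd
  have hbefore : ∀ t, t < sInf S → b t < a t := fun t ht =>
    not_le.1 fun h => (csInf_le hS_bdd h).not_gt ht
  refine Or.inr (Or.inr ⟨sInf S, hbefore, le_antisymm ?_ ht₀, fun t => hcross _ t ht₀⟩)
  exact le_of_tendsto_of_tendsto (hb.continuousAt.tendsto.mono_left nhdsWithin_le_nhds)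
    (ha.continuousAt.tendsto.mono_left nhdsWithin_le_nhds)
    (eventually_nhdsWithin_of_forall (s := Iio (sInf S)) fun t ht => (hbefore t ht).le)

theorem flow_ne_flow {E : Type*} [NormedAddCommGroup E] [NormedSpace ℝ E] {V : E → E} {K : NNReal}
    (hV : LipschitzWith K V) {z : ℝ → E → E} (hz0 : ∀ w, z 0 w = w)
    (hode : ∀ w t, HasDerivAt (fun τ => z τ w) (V (z t w)) t) {z₁ z₂ : E} (hne : z₁ ≠ z₂) (t : ℝ) :
    z t z₁ ≠ z t z₂ := fun h => hne <| by
  simpa [hz0] using congrFun (ODE_solution_unique_univ (v := fun _ => V) (s := fun _ => univ)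
    (fun _ => hV.lipschitzOnWith) (fun τ => ⟨hode z₁ τ, mem_univ _⟩)
    (fun τ => ⟨hode z₂ τ, mem_univ _⟩) h) 0

theorem cone_invariance_property_general
    {X Y : Type*} [NormedAddCommGroup X] [NormedSpace ℝ X] [CompleteSpace X]
    [NormedAddCommGroup Y] [NormedSpace ℝ Y] [CompleteSpace Y]
    (A : X →L[ℝ] X) (B : Y →L[ℝ] Y) (α β δ : ℝ)
    (F : X × Y → X) (G : X × Y → Y)
    (z : ℝ → X × Y → X × Y)
    (hA : ∀ t : ℝ, 0 ≤ t → ‖NormedSpace.exp (t • A)‖ ≤ Real.exp (α * t))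
    (hB : ∀ t : ℝ, 0 ≤ t → ‖NormedSpace.exp ((-t) • B)‖ ≤ Real.exp (-(β * t)))
    (hLip : ∀ w₁ w₂ : X × Y, ‖((F w₁, G w₁) : X × Y) - (F w₂, G w₂)‖ ≤ δ * ‖w₁ - w₂‖)
    (hgap : 2 * δ < β - α)
    (hz0 : ∀ w : X × Y, z 0 w = w)
    (hode : ∀ (w : X × Y) (t : ℝ),
      HasDerivAt (fun τ => z τ w)
        (((A (z t w).1, B (z t w).2) : X × Y) + (F (z t w), G (z t w))) t)
    (z₁ z₂ : X × Y) (hne : z₁ ≠ z₂) :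
    (∀ t : ℝ, ‖(z t z₁).2 - (z t z₂).2‖ < ‖(z t z₁).1 - (z t z₂).1‖) ∨
    (∀ t : ℝ, ‖(z t z₁).1 - (z t z₂).1‖ < ‖(z t z₁).2 - (z t z₂).2‖) ∨
    (∃ t₀ : ℝ,
      (∀ t : ℝ, t < t₀ → ‖(z t z₁).2 - (z t z₂).2‖ < ‖(z t z₁).1 - (z t z₂).1‖) ∧
      ‖(z t₀ z₁).2 - (z t₀ z₂).2‖ = ‖(z t₀ z₁).1 - (z t₀ z₂).1‖ ∧
      (∀ t : ℝ, t₀ < t → ‖(z t z₁).1 - (z t z₂).1‖ < ‖(z t z₁).2 - (z t z₂).2‖)) := by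
  have hH : LipschitzWith δ.toNNReal fun w => ((F w, G w) : X × Y) :=
    LipschitzWith.of_dist_le_mul fun w₁ w₂ => by
      simpa only [dist_eq_norm] using (hLip w₁ w₂).trans
        (mul_le_mul_of_nonneg_right (Real.le_coe_toNNReal δ) (norm_nonneg _))
  have hsep := flow_ne_flow ((A.prodMap B).lipschitz.add hH) hz0 hode hne
  have hu : ∀ t, HasDerivAt (fun τ => (z τ z₁).1 - (z τ z₂).1)
      (A ((z t z₁).1 - (z t z₂).1) + (F (z t z₁) - F (z t z₂))) t := fun t =>
    ((hasFDerivAt_fst.comp_hasDerivAt t (hode z₁ t)).fun_sub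
      (hasFDerivAt_fst.comp_hasDerivAt t (hode z₂ t))).congr_deriv (by
        simp only [ContinuousLinearMap.coe_fst', Prod.fst_add, map_sub]; abel)
  have hv : ∀ t, HasDerivAt (fun τ => (z τ z₁).2 - (z τ z₂).2)
      (B ((z t z₁).2 - (z t z₂).2) + (G (z t z₁) - G (z t z₂))) t := fun t =>
    ((hasFDerivAt_snd.comp_hasDerivAt t (hode z₁ t)).fun_sub
      (hasFDerivAt_snd.comp_hasDerivAt t (hode z₂ t))).congr_deriv (by
        simp only [ContinuousLinearMap.coe_snd', Prod.snd_add, map_sub]; abel)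
  set u : ℝ → X := fun t => (z t z₁).1 - (z t z₂).1
  set v : ℝ → Y := fun t => (z t z₁).2 - (z t z₂).2
  have hcone : ∀ x, ‖u x‖ - ‖v x‖ ≤ 0 →
      ∀ᶠ y in 𝓝[>] x, slope (fun t => ‖u t‖ - ‖v t‖) x y < α * (‖u x‖ - ‖v x‖) := by
    intro x hx
    have hdist : ‖z x z₁ - z x z₂‖ = ‖v x‖ := max_eq_right (sub_nonpos.1 hx)
    refine eventually_slope_norm_sub_norm_lt hA hB hgap (hu x) (hv x) ?_ ?_ fun hv0 => ?_
    · exact hdist ▸ (norm_fst_le _).trans (hLip _ _)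
    · exact hdist ▸ (norm_snd_le _).trans (hLip _ _)
    · exact hsep x (sub_eq_zero.1 (norm_eq_zero.1 (by rw [hdist, hv0, norm_zero])))
  have hu_cont : Continuous fun t => ‖u t‖ :=
    (continuous_iff_continuousAt.2 fun t => (hu t).continuousAt).norm
  have hv_cont : Continuous fun t => ‖v t‖ :=
    (continuous_iff_continuousAt.2 fun t => (hv t).continuousAt).norm
  exact lt_or_gt_or_crossing hu_cont hv_cont fun s t hs hst => sub_neg.1 <|
    lt_zero_of_slope_lt_mul_self (hu_cont.sub hv_cont) hcone (sub_nonpos.2 hs) hst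

/-- **Cone Invariance Property.** -/
theorem cone_invariance_property
    {X Y : Type*} [NormedAddCommGroup X] [NormedSpace ℝ X] [CompleteSpace X]
    [NormedAddCommGroup Y] [NormedSpace ℝ Y] [CompleteSpace Y]
    (A : X →L[ℝ] X) (B : Y →L[ℝ] Y) (α β δ : ℝ)
    (F : X × Y → X) (G : X × Y → Y)
    (z : ℝ → X × Y → X × Y)
    (hA : ∀ t : ℝ, 0 ≤ t → ‖NormedSpace.exp (t • A)‖ ≤ Real.exp (α * t))
    (hB : ∀ t : ℝ, 0 ≤ t → ‖NormedSpace.exp ((-t) • B)‖ ≤ Real.exp (-(β * t)))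
    (hδ : 0 ≤ δ)
    (hLip : ∀ w₁ w₂ : X × Y, ‖((F w₁, G w₁) : X × Y) - (F w₂, G w₂)‖ ≤ δ * ‖w₁ - w₂‖)
    (hH0 : ((F 0, G 0) : X × Y) = 0)
    (hgap : 2 * δ < β - α)
    (hz0 : ∀ w : X × Y, z 0 w = w)
    (hode : ∀ (w : X × Y) (t : ℝ),
      HasDerivAt (fun τ => z τ w)
        (((A (z t w).1, B (z t w).2) : X × Y) + (F (z t w), G (z t w))) t)
    (z₁ z₂ : X × Y) (hne : z₁ ≠ z₂) :
    (∀ t : ℝ, ‖(z t z₁).2 - (z t z₂).2‖ < ‖(z t z₁).1 - (z t z₂).1‖) ∨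
    (∀ t : ℝ, ‖(z t z₁).1 - (z t z₂).1‖ < ‖(z t z₁).2 - (z t z₂).2‖) ∨
    (∃ t₀ : ℝ,
      (∀ t : ℝ, t < t₀ → ‖(z t z₁).2 - (z t z₂).2‖ < ‖(z t z₁).1 - (z t z₂).1‖) ∧
      ‖(z t₀ z₁).2 - (z t₀ z₂).2‖ = ‖(z t₀ z₁).1 - (z t₀ z₂).1‖ ∧
      (∀ t : ℝ, t₀ < t → ‖(z t z₁).1 - (z t z₂).1‖ < ‖(z t z₁).2 - (z t z₂).2‖)) :=
  cone_invariance_property_general A B α β δ F G z hA hB hLip hgap hz0 hode z₁ z₂ hne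
end
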